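/- arXiv:2302.10065 — 17 statements merged into one kernel-verified Lean document; each statement's English description precedes it below -/
import Mathlib

section
/- Let 0 < γ₁ < 1 < γ₂, σ₀ > 0, σ_max > 0, and let σ : ℕ → ℝ satisfy σ(0) = σ₀ and σ(j) > 0 for all j. Let k ∈ ℕ and let S ⊆ {0,…,k−1} be such that σ(j+1) ≥ γ₁·σ(j) for every j ∈ S and σ(j+1) ≥ γ₂·σ(j) for every j ∈ {0,…,k−1} \ S. If σ(j) ≤ σ_max for all j ≤ k, then k ≤ |S|·(1 + |log γ₁|/log γ₂) + (1/log γ₂)·log(σ_max/σ₀). -/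
lemma sigma_lower_bound (γ₁ γ₂ σ₀ : ℝ) (hγ₁0 : 0 < γ₁) (hγ₂ : 0 < γ₂)
    (σ : ℕ → ℝ) (hσ0 : σ 0 = σ₀) :
    ∀ k (S : Finset ℕ), S ⊆ Finset.range k →
      (∀ j ∈ S, γ₁ * σ j ≤ σ (j + 1)) →
      (∀ j ∈ Finset.range k \ S, γ₂ * σ j ≤ σ (j + 1)) →
      σ₀ * γ₁ ^ S.card * γ₂ ^ (k - S.card) ≤ σ k := by
  intro k
  induction k with
  | zero =>
    intro S hS _ _
    have : S = ∅ := Finset.subset_empty.mp (by simpa using hS)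
    simp [this, hσ0]
  | succ k ih =>
    intro S hS hSucc hFail
    by_cases hk : k ∈ S
    · set S' := S.erase k with hS'
      have hsub : S' ⊆ Finset.range k := by
        intro j hj
        have hjk : j ≠ k := Finset.ne_of_mem_erase hj
        have := hS (Finset.mem_of_mem_erase hj)
        simp only [Finset.mem_range] at this ⊢
        omega
      have hIH := ih S' hsub
        (fun j hj => hSucc j (Finset.mem_of_mem_erase hj))
        (fun j hj => by
          apply hFail j
          simp only [Finset.mem_sdiff, Finset.mem_range] at hj ⊢
          constructor
          · omega
          · intro hjS
            exact hj.2 (Finset.mem_erase.mpr ⟨by omega, hjS⟩))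
      have hcard : S.card = S'.card + 1 := by
        rw [hS']
        rw [Finset.card_erase_of_mem hk]
        have : 0 < S.card := Finset.card_pos.mpr ⟨k, hk⟩
        omega
      have hstep := hSucc k hk
      have hle : S'.card ≤ k := by
        simpa using Finset.card_le_card hsub
      calc σ₀ * γ₁ ^ S.card * γ₂ ^ (k + 1 - S.card)
          = γ₁ * (σ₀ * γ₁ ^ S'.card * γ₂ ^ (k - S'.card)) := by
            rw [hcard, show k + 1 - (S'.card + 1) = k - S'.card by omega]
            ring
        _ ≤ γ₁ * σ k := by
            apply mul_le_mul_of_nonneg_left hIH hγ₁0.le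
        _ ≤ σ (k + 1) := hstep
    · have hsub : S ⊆ Finset.range k := by
        intro j hj
        have := hS hj
        simp only [Finset.mem_range] at this ⊢
        rcases Nat.lt_succ_iff_lt_or_eq.mp this with h | h
        · exact h
        · exact absurd (h ▸ hj) hk
      have hIH := ih S hsub hSucc
        (fun j hj => by
          apply hFail j
          simp only [Finset.mem_sdiff, Finset.mem_range] at hj ⊢
          exact ⟨by omega, hj.2⟩)
      have hstep := hFail k (by simp [hk])
      have hle : S.card ≤ k := by simpa using Finset.card_le_card hsub
      calc σ₀ * γ₁ ^ S.card * γ₂ ^ (k + 1 - S.card)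
          = γ₂ * (σ₀ * γ₁ ^ S.card * γ₂ ^ (k - S.card)) := by
            rw [show k + 1 - S.card = (k - S.card) + 1 by omega]
            ring
        _ ≤ γ₂ * σ k := mul_le_mul_of_nonneg_left hIH hγ₂.le
        _ ≤ σ (k + 1) := hstep

/-- Lemma 2.1 of the paper: bound on the total number of iterations in terms of
the number of successful iterations for adaptive regularization methods. -/
theorem successful_iterations_bound
    (γ₁ γ₂ σ₀ σmax : ℝ) (hγ₁0 : 0 < γ₁) (hγ₁1 : γ₁ < 1) (hγ₂ : 1 < γ₂)
    (hσ₀ : 0 < σ₀) (hσmax : 0 < σmax)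
    (σ : ℕ → ℝ) (hσ0 : σ 0 = σ₀) (hσpos : ∀ j, 0 < σ j)
    (k : ℕ) (S : Finset ℕ) (hS : S ⊆ Finset.range k)
    (hSucc : ∀ j ∈ S, γ₁ * σ j ≤ σ (j + 1))
    (hFail : ∀ j ∈ Finset.range k \ S, γ₂ * σ j ≤ σ (j + 1))
    (hbound : ∀ j ≤ k, σ j ≤ σmax) :
    (k : ℝ) ≤ (S.card : ℝ) * (1 + |Real.log γ₁| / Real.log γ₂)
      + (1 / Real.log γ₂) * Real.log (σmax / σ₀) := by
  have hγ₂0 : (0:ℝ) < γ₂ := lt_trans one_pos hγ₂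
  have hkey := sigma_lower_bound γ₁ γ₂ σ₀ hγ₁0 hγ₂0 σ hσ0 k S hS hSucc hFail
  have hσk : σ k ≤ σmax := hbound k le_rfl
  have hle : S.card ≤ k := by simpa using Finset.card_le_card hS
  set s := S.card with hs
  set n := k - s with hn
  have hkn : k = s + n := by omega
  have hlhs : 0 < σ₀ * γ₁ ^ s * γ₂ ^ n := by positivity
  have hlog : Real.log (σ₀ * γ₁ ^ s * γ₂ ^ n) ≤ Real.log σmax := by
    apply Real.log_le_log (by positivity)
    calc σ₀ * γ₁ ^ s * γ₂ ^ n ≤ σ k := by rw [hn]; exact hkey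
      _ ≤ σmax := hσk
  rw [Real.log_mul (by positivity) (by positivity),
      Real.log_mul (by positivity) (by positivity),
      Real.log_pow, Real.log_pow] at hlog
  have hL2 : 0 < Real.log γ₂ := Real.log_pos hγ₂
  have hL1 : Real.log γ₁ < 0 := Real.log_neg hγ₁0 hγ₁1
  rw [abs_of_neg hL1, Real.log_div (ne_of_gt hσmax) (ne_of_gt hσ₀), hkn]
  push_cast
  set L1 := Real.log γ₁
  set L2 := Real.log γ₂
  refine le_of_mul_le_mul_right ?_ hL2
  have hexp : ((s:ℝ) * (1 + -L1 / L2) + 1 / L2 * (Real.log σmax - Real.log σ₀)) * L2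
      = (s:ℝ) * L2 - (s:ℝ) * L1 + (Real.log σmax - Real.log σ₀) := by
    field_simp
    ring
  rw [hexp]
  nlinarith [hlog]
end

section
/- Let n ≥ 1, let H be a real symmetric n×n matrix, g ∈ ℝⁿ with g ≠ 0, σ > 0, κ_θ > 0, and set μ := [−λ_min(H)]₊. If s ∈ ℝⁿ satisfies ‖(H + (√(σ‖g‖) + μ)·I)s + g‖ ≤ κ_θ‖g‖, then ‖s‖ ≤ (1+κ_θ)·√(‖g‖/σ). -/
open RealInnerProductSpace

/-- The smallest eigenvalue of a symmetric operator on ℝⁿ, as the infimum of the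
Rayleigh quotient over the unit sphere. -/
noncomputable def lamMin {n : ℕ} (T : EuclideanSpace ℝ (Fin n) → EuclideanSpace ℝ (Fin n)) : ℝ :=
  sInf {r : ℝ | ∃ v : EuclideanSpace ℝ (Fin n), ‖v‖ = 1 ∧ ⟪v, T v⟫ = r}

lemma lamMin_quadratic_lower_bound {n : ℕ} (hn : 1 ≤ n)
    (L : EuclideanSpace ℝ (Fin n) →ₗ[ℝ] EuclideanSpace ℝ (Fin n))
    (s : EuclideanSpace ℝ (Fin n)) :
    lamMin (fun v => L v) * ‖s‖ ^ 2 ≤ ⟪s, L s⟫ := by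
  set T : EuclideanSpace ℝ (Fin n) →L[ℝ] EuclideanSpace ℝ (Fin n) :=
    LinearMap.toContinuousLinearMap L with hT
  have hTL : ∀ v, T v = L v := fun v => rfl
  set S : Set ℝ := {r : ℝ | ∃ v : EuclideanSpace ℝ (Fin n), ‖v‖ = 1 ∧ ⟪v, L v⟫ = r} with hS
  have hbdd : BddBelow S := by
    refine ⟨-‖T‖, fun r hr => ?_⟩
    obtain ⟨v, hv1, hvr⟩ := hr
    have h1 : |⟪v, L v⟫| ≤ ‖v‖ * ‖L v‖ := abs_real_inner_le_norm v (L v)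
    have h2 : ‖L v‖ ≤ ‖T‖ * ‖v‖ := by rw [← hTL]; exact T.le_opNorm v
    rw [hv1] at h1 h2
    simp only [one_mul, mul_one] at h1 h2
    have := neg_abs_le ⟪v, L v⟫
    linarith [abs_nonneg ⟪v, L v⟫]
  have hmin : ∀ v : EuclideanSpace ℝ (Fin n), ‖v‖ = 1 →
      lamMin (fun v => L v) ≤ ⟪v, L v⟫ := by
    intro v hv
    exact csInf_le hbdd ⟨v, hv, rfl⟩
  rcases eq_or_ne s 0 with rfl | hs
  · simp
  · have hns : 0 < ‖s‖ := norm_pos_iff.mpr hs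
    set v : EuclideanSpace ℝ (Fin n) := ‖s‖⁻¹ • s with hv
    have hv1 : ‖v‖ = 1 := by
      rw [hv, norm_smul, norm_inv, norm_norm, inv_mul_cancel₀ hns.ne']
    have key := hmin v hv1
    have hexp : ⟪v, L v⟫ = ‖s‖⁻¹ * ‖s‖⁻¹ * ⟪s, L s⟫ := by
      rw [hv, map_smul, real_inner_smul_left, real_inner_smul_right]; ring
    rw [hexp] at key
    have h2 : ‖s‖ ^ 2 > 0 := by positivity
    have := mul_le_mul_of_nonneg_left key (le_of_lt h2)
    calc lamMin (fun v => L v) * ‖s‖ ^ 2 = ‖s‖ ^ 2 * lamMin (fun v => L v) := by ring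
      _ ≤ ‖s‖ ^ 2 * (‖s‖⁻¹ * ‖s‖⁻¹ * ⟪s, L s⟫) := this
      _ = ⟪s, L s⟫ := by field_simp

/-- Lemma 2.2 of the paper, bound (2.12): norm bound for the regularized Newton step. -/
theorem regularized_newton_step_norm_bound {n : ℕ} (hn : 1 ≤ n)
    (H : Matrix (Fin n) (Fin n) ℝ) (hH : H.IsHermitian)
    (g s : EuclideanSpace ℝ (Fin n)) (hg : g ≠ 0)
    (σ κθ : ℝ) (hσ : 0 < σ) (hκθ : 0 < κθ)
    (μ : ℝ) (hμ : μ = max (-(lamMin fun v => Matrix.toEuclideanLin H v)) 0)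
    (hres : ‖Matrix.toEuclideanLin H s + (Real.sqrt (σ * ‖g‖) + μ) • s + g‖ ≤ κθ * ‖g‖) :
    ‖s‖ ≤ (1 + κθ) * Real.sqrt (‖g‖ / σ) := by
  set L : EuclideanSpace ℝ (Fin n) →ₗ[ℝ] EuclideanSpace ℝ (Fin n) :=
    Matrix.toEuclideanLin H with hL
  have hgpos : (0:ℝ) < ‖g‖ := norm_pos_iff.mpr hg
  set lam : ℝ := Real.sqrt (σ * ‖g‖) with hlam
  have hlampos : 0 < lam := Real.sqrt_pos.mpr (by positivity)
  -- lamMin ≥ -μ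
  have hmu1 : -(lamMin fun v => L v) ≤ μ := hμ ▸ le_max_left _ _
  have hquad : lamMin (fun v => L v) * ‖s‖ ^ 2 ≤ ⟪s, L s⟫ :=
    lamMin_quadratic_lower_bound hn L s
  have hlow : -μ * ‖s‖ ^ 2 ≤ ⟪s, L s⟫ := by
    have : -μ ≤ lamMin fun v => L v := by linarith
    nlinarith [sq_nonneg ‖s‖]
  rcases eq_or_ne s 0 with rfl | hs
  · simp only [norm_zero]
    positivity
  have hns : 0 < ‖s‖ := norm_pos_iff.mpr hs
  set r : EuclideanSpace ℝ (Fin n) := L s + (lam + μ) • s + g with hr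
  have hinner : ⟪s, r⟫ = ⟪s, L s⟫ + (lam + μ) * ‖s‖ ^ 2 + ⟪s, g⟫ := by
    rw [hr, inner_add_right, inner_add_right, real_inner_smul_right,
      real_inner_self_eq_norm_sq]
  have h1 : ⟪s, r⟫ ≤ ‖s‖ * (κθ * ‖g‖) := by
    calc ⟪s, r⟫ ≤ ‖s‖ * ‖r‖ := real_inner_le_norm s r
      _ ≤ ‖s‖ * (κθ * ‖g‖) := by
          apply mul_le_mul_of_nonneg_left _ (le_of_lt hns)
          exact hres
  have h2 : -⟪s, g⟫ ≤ ‖s‖ * ‖g‖ := by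
    have := abs_real_inner_le_norm s g
    linarith [neg_abs_le ⟪s, g⟫]
  have hkey : lam * ‖s‖ ^ 2 ≤ (1 + κθ) * ‖g‖ * ‖s‖ := by
    have : lam * ‖s‖ ^ 2 ≤ ⟪s, L s⟫ + (lam + μ) * ‖s‖ ^ 2 := by nlinarith
    have h3 : ⟪s, L s⟫ + (lam + μ) * ‖s‖ ^ 2 = ⟪s, r⟫ - ⟪s, g⟫ := by
      rw [hinner]; ring
    nlinarith
  -- ‖g‖ = √(‖g‖/σ) * lam
  have hgeq : ‖g‖ = Real.sqrt (‖g‖ / σ) * lam := by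
    rw [hlam, ← Real.sqrt_mul (by positivity)]
    rw [show ‖g‖ / σ * (σ * ‖g‖) = ‖g‖ ^ 2 by field_simp]
    exact (Real.sqrt_sq hgpos.le).symm
  rw [hgeq] at hkey
  have hpos : 0 < lam * ‖s‖ := mul_pos hlampos hns
  have : ‖s‖ * (lam * ‖s‖) ≤ (1 + κθ) * Real.sqrt (‖g‖ / σ) * (lam * ‖s‖) := by
    nlinarith
  exact le_of_mul_le_mul_right this hpos
end

section
/- Let n ≥ 1, let H be a real symmetric n×n matrix, g ∈ ℝⁿ with g ≠ 0, σ > 0, κ_a ≥ 1, and ς₂ ∈ [0, 1/2). Suppose H + √(κ_a σ‖g‖)·I is positive definite and s ∈ ℝⁿ satisfies ‖(H + √(κ_a σ‖g‖)·I)s + g‖ ≤ ς₂·√(κ_a σ‖g‖)·‖s‖. Then −(⟨g,s⟩ + (1/2)⟨s,Hs⟩) ≥ ((1−2ς₂)/2)·√(κ_a σ‖g‖)·‖s‖². -/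
open RealInnerProductSpace

lemma inner_toEuclideanLin_eq_dot {n : ℕ} (H : Matrix (Fin n) (Fin n) ℝ)
    (s : EuclideanSpace ℝ (Fin n)) :
    ⟪s, Matrix.toEuclideanLin H s⟫
      = dotProduct (WithLp.equiv 2 _ s) (H.mulVec (WithLp.equiv 2 _ s)) := by
  simp [EuclideanSpace.inner_eq_star_dotProduct, Matrix.toEuclideanLin_apply,
    dotProduct, Matrix.mulVec, mul_comm]

/-- Lemma 2.3 of the paper, case of the convex-type step `s^{conv}`:
lower bound on the decrease of the local quadratic model. -/
theorem quadratic_decrease_convex_step {n : ℕ} (hn : 1 ≤ n)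
    (H : Matrix (Fin n) (Fin n) ℝ) (hH : H.IsHermitian)
    (g s : EuclideanSpace ℝ (Fin n)) (hg : g ≠ 0)
    (σ κa ς₂ : ℝ) (hσ : 0 < σ) (hκa : 1 ≤ κa) (hς₂0 : 0 ≤ ς₂) (hς₂ : ς₂ < 1 / 2)
    (hpd : (H + Real.sqrt (κa * σ * ‖g‖) • (1 : Matrix (Fin n) (Fin n) ℝ)).PosDef)
    (hres : ‖Matrix.toEuclideanLin H s + Real.sqrt (κa * σ * ‖g‖) • s + g‖
      ≤ ς₂ * Real.sqrt (κa * σ * ‖g‖) * ‖s‖) :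
    -(⟪g, s⟫ + (1 / 2) * ⟪s, Matrix.toEuclideanLin H s⟫)
      ≥ ((1 - 2 * ς₂) / 2) * Real.sqrt (κa * σ * ‖g‖) * ‖s‖ ^ 2 := by
  set l := Real.sqrt (κa * σ * ‖g‖) with hl
  have hl0 : 0 ≤ l := Real.sqrt_nonneg _
  -- positive semidefiniteness
  have hq : 0 ≤ ⟪s, Matrix.toEuclideanLin (H + l • 1) s⟫ := by
    rw [inner_toEuclideanLin_eq_dot]
    simpa using hpd.posSemidef.re_dotProduct_nonneg (WithLp.equiv 2 _ s)
  have hq' : -(l * ‖s‖ ^ 2) ≤ ⟪s, Matrix.toEuclideanLin H s⟫ := by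
    have : Matrix.toEuclideanLin (H + l • 1) s
        = Matrix.toEuclideanLin H s + l • s := by
      simp [map_add, Matrix.toEuclideanLin_apply, Matrix.add_mulVec,
        Matrix.smul_mulVec]
    rw [this, inner_add_right, inner_smul_right, real_inner_self_eq_norm_sq] at hq
    linarith
  have key : ⟪g, s⟫ = ⟪Matrix.toEuclideanLin H s + l • s + g, s⟫
      - ⟪s, Matrix.toEuclideanLin H s⟫ - l * ‖s‖ ^ 2 := by
    rw [inner_add_left, inner_add_left, inner_smul_left, real_inner_self_eq_norm_sq,
      real_inner_comm (Matrix.toEuclideanLin H s) s]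
    simp
    ring
  have h1 : ⟪Matrix.toEuclideanLin H s + l • s + g, s⟫ ≤ ς₂ * l * ‖s‖ ^ 2 := by
    calc ⟪Matrix.toEuclideanLin H s + l • s + g, s⟫
        ≤ ‖Matrix.toEuclideanLin H s + l • s + g‖ * ‖s‖ := real_inner_le_norm _ _
      _ ≤ (ς₂ * l * ‖s‖) * ‖s‖ := by
          apply mul_le_mul_of_nonneg_right hres (norm_nonneg s)
      _ = ς₂ * l * ‖s‖ ^ 2 := by ring
  rw [key]
  nlinarith [hq', h1]
end

section
/- Let n ≥ 1, let H be a real symmetric n×n matrix, g ∈ ℝⁿ with g ≠ 0, σ > 0, ς₃ ∈ [0,1), and set μ := [−λ_min(H)]₊. If s ∈ ℝⁿ satisfies ‖(H + (√(σ‖g‖) + μ)·I)s + g‖ ≤ ς₃·√(σ‖g‖)·‖s‖, then −(⟨g,s⟩ + (1/2)⟨s,Hs⟩) ≥ (1−ς₃)·√(σ‖g‖)·‖s‖². -/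
open RealInnerProductSpace

lemma lamMin_rayleigh {n : ℕ} (H : Matrix (Fin n) (Fin n) ℝ) (s : EuclideanSpace ℝ (Fin n))
    (hs : s ≠ 0) :
    lamMin (fun v => Matrix.toEuclideanLin H v) * ‖s‖ ^ 2 ≤ ⟪s, Matrix.toEuclideanLin H s⟫ := by
  set T := Matrix.toEuclideanLin H
  set T' := LinearMap.toContinuousLinearMap T
  have hbdd : BddBelow {r : ℝ | ∃ v : EuclideanSpace ℝ (Fin n), ‖v‖ = 1 ∧ ⟪v, T v⟫ = r} := by
    refine ⟨-‖T'‖, ?_⟩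
    rintro r ⟨v, hv, rfl⟩
    have h1 : |⟪v, T v⟫| ≤ ‖v‖ * ‖T v‖ := abs_real_inner_le_norm v (T v)
    have h2 : ‖T v‖ ≤ ‖T'‖ * ‖v‖ := T'.le_opNorm v
    rw [hv, one_mul] at h1
    rw [hv, mul_one] at h2
    have := neg_abs_le ⟪v, T v⟫
    linarith
  have hns : (0:ℝ) < ‖s‖ := norm_pos_iff.mpr hs
  set u : EuclideanSpace ℝ (Fin n) := ‖s‖⁻¹ • s with hu
  have hun : ‖u‖ = 1 := by
    rw [hu, norm_smul, norm_inv, norm_norm, inv_mul_cancel₀ hns.ne']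
  have hray : ⟪u, T u⟫ = ‖s‖⁻¹ * (‖s‖⁻¹ * ⟪s, T s⟫) := by
    rw [hu, map_smul, real_inner_smul_left, real_inner_smul_right]
  have hle : lamMin (fun v => T v) ≤ ⟪u, T u⟫ := csInf_le hbdd ⟨u, hun, rfl⟩
  rw [hray] at hle
  calc lamMin (fun v => T v) * ‖s‖ ^ 2
      ≤ ‖s‖⁻¹ * (‖s‖⁻¹ * ⟪s, T s⟫) * ‖s‖ ^ 2 :=
        mul_le_mul_of_nonneg_right hle (by positivity)
    _ = (‖s‖⁻¹ * ‖s‖) * ((‖s‖⁻¹ * ‖s‖) * ⟪s, T s⟫) := by rw [pow_two]; ring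
    _ = ⟪s, T s⟫ := by rw [inv_mul_cancel₀ hns.ne']; ring

/-- Lemma 2.3 of the paper, case of the regularized Newton step `s^{neig}`:
lower bound on the decrease of the local quadratic model. -/
theorem quadratic_decrease_neig_step {n : ℕ} (hn : 1 ≤ n)
    (H : Matrix (Fin n) (Fin n) ℝ) (hH : H.IsHermitian)
    (g s : EuclideanSpace ℝ (Fin n)) (hg : g ≠ 0)
    (σ ς₃ : ℝ) (hσ : 0 < σ) (hς₃0 : 0 ≤ ς₃) (hς₃ : ς₃ < 1)
    (μ : ℝ) (hμ : μ = max (-(lamMin fun v => Matrix.toEuclideanLin H v)) 0)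
    (hres : ‖Matrix.toEuclideanLin H s + (Real.sqrt (σ * ‖g‖) + μ) • s + g‖
      ≤ ς₃ * Real.sqrt (σ * ‖g‖) * ‖s‖) :
    -(⟪g, s⟫ + (1 / 2) * ⟪s, Matrix.toEuclideanLin H s⟫)
      ≥ (1 - ς₃) * Real.sqrt (σ * ‖g‖) * ‖s‖ ^ 2 := by
  set T := Matrix.toEuclideanLin H with hT
  set lam := Real.sqrt (σ * ‖g‖) with hlam
  by_cases hs : s = 0
  · simp [hs]
  -- basic facts
  have hμ0 : 0 ≤ μ := hμ ▸ le_max_right _ _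
  have hμ1 : -(lamMin fun v => T v) ≤ μ := hμ ▸ le_max_left _ _
  have hRay : -(μ * ‖s‖ ^ 2) ≤ ⟪s, T s⟫ := by
    have h1 := lamMin_rayleigh H s hs
    have h2 : -(μ * ‖s‖ ^ 2) ≤ lamMin (fun v => T v) * ‖s‖ ^ 2 := by
      have := mul_le_mul_of_nonneg_right (neg_le_of_neg_le hμ1) (sq_nonneg ‖s‖)
      linarith
    linarith
  set r : EuclideanSpace ℝ (Fin n) := T s + (lam + μ) • s + g with hr
  have hginner : ⟪g, s⟫ = ⟪r, s⟫ - ⟪s, T s⟫ - (lam + μ) * ‖s‖ ^ 2 := by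
    have : g = r - T s - (lam + μ) • s := by rw [hr]; abel
    rw [this]
    rw [inner_sub_left, inner_sub_left, real_inner_smul_left,
      real_inner_comm (T s) s, real_inner_self_eq_norm_sq]
  have hrs : -⟪r, s⟫ ≥ -(ς₃ * lam * ‖s‖ ^ 2) := by
    have h1 : ⟪r, s⟫ ≤ ‖r‖ * ‖s‖ := real_inner_le_norm r s
    have h2 : ‖r‖ * ‖s‖ ≤ ς₃ * lam * ‖s‖ * ‖s‖ :=
      mul_le_mul_of_nonneg_right hres (norm_nonneg s)
    nlinarith [sq_nonneg ‖s‖]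
  rw [hginner]
  nlinarith [sq_nonneg ‖s‖, norm_nonneg s]
end

section
/- Let n ≥ 1, let H be a real symmetric n×n matrix, g ∈ ℝⁿ with g ≠ 0, σ > 0, κ_C > 0, and let v ∈ ℝⁿ satisfy ‖v‖ = 1, ⟨g,v⟩ ≤ 0 and ⟨v,Hv⟩ ≤ −κ_C·√(σ‖g‖). Set s := (κ_C·√(σ‖g‖)/σ)·v. Then −(⟨g,s⟩ + (1/2)⟨s,Hs⟩) ≥ (1/2)·σ·‖s‖³. -/
open RealInnerProductSpace

theorem half_mul_norm_smul_cube_le_neg_quadratic {E : Type*} [NormedAddCommGroup E]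
    [InnerProductSpace ℝ E] (T : E →ₗ[ℝ] E) {g v : E} {α σ : ℝ} (hα : 0 ≤ α)
    (hv : ‖v‖ = 1) (hgv : ⟪g, v⟫ ≤ 0) (hcurv : ⟪v, T v⟫ ≤ -(σ * α)) :
    (1 / 2) * σ * ‖α • v‖ ^ 3 ≤ -(⟪g, α • v⟫ + (1 / 2) * ⟪α • v, T (α • v)⟫) := by
  have hnorm : ‖α • v‖ = α := by rw [norm_smul, hv, mul_one, Real.norm_of_nonneg hα]
  have hlin : ⟪g, α • v⟫ = α * ⟪g, v⟫ := real_inner_smul_right g v α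
  have hquad : ⟪α • v, T (α • v)⟫ = α ^ 2 * ⟪v, T v⟫ := by
    rw [map_smul, real_inner_smul_left, real_inner_smul_right]; ring
  have hcurv' : α ^ 2 * ⟪v, T v⟫ ≤ -(σ * α ^ 3) := by
    nlinarith [mul_le_mul_of_nonneg_left hcurv (sq_nonneg α)]
  rw [hnorm, hlin, hquad]
  nlinarith [mul_nonpos_of_nonneg_of_nonpos hα hgv]

theorem quadratic_decrease_curv_step_general {n : ℕ}
    (H : Matrix (Fin n) (Fin n) ℝ)
    (g v : EuclideanSpace ℝ (Fin n))
    (σ κC : ℝ) (hσ : 0 < σ) (hκC : 0 < κC)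
    (hv : ‖v‖ = 1) (hgv : ⟪g, v⟫ ≤ 0)
    (hcurv : ⟪v, Matrix.toEuclideanLin H v⟫ ≤ -κC * Real.sqrt (σ * ‖g‖))
    (s : EuclideanSpace ℝ (Fin n)) (hs : s = (κC * Real.sqrt (σ * ‖g‖) / σ) • v) :
    -(⟪g, s⟫ + (1 / 2) * ⟪s, Matrix.toEuclideanLin H s⟫)
      ≥ (1 / 2) * σ * ‖s‖ ^ 3 := by
  set α := κC * Real.sqrt (σ * ‖g‖) / σ
  have hσα : σ * α = κC * Real.sqrt (σ * ‖g‖) := mul_div_cancel₀ _ hσ.ne'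
  subst hs
  exact half_mul_norm_smul_cube_le_neg_quadratic (Matrix.toEuclideanLin H) (by positivity) hv hgv
    (by rw [hσα]; linarith)

/-- Lemma 2.3 of the paper, case of the negative-curvature step `s^{curv}`:
lower bound on the decrease of the local quadratic model. -/
theorem quadratic_decrease_curv_step {n : ℕ} (hn : 1 ≤ n)
    (H : Matrix (Fin n) (Fin n) ℝ) (hH : H.IsHermitian)
    (g v : EuclideanSpace ℝ (Fin n)) (hg : g ≠ 0)
    (σ κC : ℝ) (hσ : 0 < σ) (hκC : 0 < κC)
    (hv : ‖v‖ = 1) (hgv : ⟪g, v⟫ ≤ 0)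
    (hcurv : ⟪v, Matrix.toEuclideanLin H v⟫ ≤ -κC * Real.sqrt (σ * ‖g‖))
    (s : EuclideanSpace ℝ (Fin n)) (hs : s = (κC * Real.sqrt (σ * ‖g‖) / σ) • v) :
    -(⟪g, s⟫ + (1 / 2) * ⟪s, Matrix.toEuclideanLin H s⟫)
      ≥ (1 / 2) * σ * ‖s‖ ^ 3 :=
  quadratic_decrease_curv_step_general H g v σ κC hσ hκC hv hgv hcurv s hs
end

section
/- Let f : ℝⁿ → ℝ be twice continuously differentiable with L_H-Lipschitz Hessian, L_H > 0. Fix x ∈ ℝⁿ, set g := ∇f(x) and H := ∇²f(x), and suppose g ≠ 0. Let σ > 0, ς₃ ∈ [0,1), κ_θ > 0, η₂ ∈ (0,1), μ := [−λ_min(H)]₊, and let s ∈ ℝⁿ satisfy ‖(H + (√(σ‖g‖) + μ)·I)s + g‖ ≤ min(ς₃·√(σ‖g‖)·‖s‖, κ_θ·‖g‖). If σ ≥ L_H(1+κ_θ)/(6(1−ς₃)(1−η₂)), then f(x) − f(x+s) ≥ η₂·(−⟨g,s⟩ − (1/2)⟨s,Hs⟩). -/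
open RealInnerProductSpace

/-!
The Lipschitz Hessian gives the Taylor bound
`f (x + s) ≤ f x + ⟪g, s⟫ + ½⟪s, H s⟫ + L_H/6 ‖s‖³`, so it suffices to show that the cubic error
is at most `(1 - η₂)` times the model decrease `Δ := -⟪g, s⟫ - ½⟪s, H s⟫`. Testing the residual
`r := (H + (λ + μ) I) s + g`, with `λ := √(σ‖g‖)`, against `s` and using `⟪s, H s⟫ ≥ -μ‖s‖²`
yields `Δ ≥ (1 - ς₃) λ ‖s‖²` and `λ ‖s‖ ≤ (1 + κ_θ) ‖g‖`. Since `λ² = σ‖g‖`, the lower bound on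
`σ` turns the second estimate into `L_H ‖s‖ ≤ 6 (1 - ς₃)(1 - η₂) λ`, and the first one then
bounds the cubic error.
-/

open Set

theorem nonneg_of_hasDerivAt_of_nonneg {φ φ' : ℝ → ℝ} (hφ : ∀ t, HasDerivAt φ (φ' t) t)
    (h0 : φ 0 = 0) (hφ' : ∀ t, 0 ≤ t → 0 ≤ φ' t) {t : ℝ} (ht : 0 ≤ t) : 0 ≤ φ t := by
  have hmono : MonotoneOn φ (Ici 0) :=
    monotoneOn_of_hasDerivWithinAt_nonneg (convex_Ici 0)
      (fun t _ => (hφ t).continuousAt.continuousWithinAt) (fun t _ => (hφ t).hasDerivWithinAt)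
      (fun t ht => hφ' t (interior_subset ht))
  simpa [h0] using hmono self_mem_Ici ht ht

theorem le_cubic_model_of_hasDerivAt {φ φ' φ'' : ℝ → ℝ} {a b : ℝ}
    (hφ : ∀ t, HasDerivAt φ (φ' t) t) (hφ' : ∀ t, HasDerivAt φ' (φ'' t) t)
    (hφ'' : ∀ t, 0 ≤ t → φ'' t ≤ a + b * t) :
    φ 1 ≤ φ 0 + φ' 0 + a / 2 + b / 6 := by
  set ψ' : ℝ → ℝ := fun t => φ' 0 + a * t + b * t ^ 2 / 2 - φ' t
  set ψ : ℝ → ℝ := fun t => φ 0 + φ' 0 * t + a * t ^ 2 / 2 + b * t ^ 3 / 6 - φ t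
  have hψ' : ∀ t, HasDerivAt ψ' (a + b * t - φ'' t) t := fun t => by
    refine ((((hasDerivAt_id t).const_mul a).const_add (φ' 0)).add
      (((hasDerivAt_pow 2 t).const_mul b).div_const 2)).sub (hφ' t) |>.congr_deriv ?_
    norm_num
    ring
  have hψ : ∀ t, HasDerivAt ψ (ψ' t) t := fun t => by
    refine (((((hasDerivAt_id t).const_mul (φ' 0)).const_add (φ 0)).add
      (((hasDerivAt_pow 2 t).const_mul a).div_const 2)).add
      (((hasDerivAt_pow 3 t).const_mul b).div_const 6)).sub (hφ t) |>.congr_deriv ?_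
    norm_num
    ring
  have hψ'_nonneg : ∀ t, 0 ≤ t → 0 ≤ ψ' t := fun t ht =>
    nonneg_of_hasDerivAt_of_nonneg hψ' (by simp [ψ'])
      (fun u hu => by linarith [hφ'' u hu]) ht
  have := nonneg_of_hasDerivAt_of_nonneg hψ (by simp [ψ]) hψ'_nonneg zero_le_one
  simp only [ψ] at this
  linarith

section InnerProductSpace

variable {E : Type*} [NormedAddCommGroup E] [InnerProductSpace ℝ E]

theorem inner_apply_le_inner_apply_add_norm_sub_mul (T S : E →L[ℝ] E) (s : E) :
    ⟪T s, s⟫ ≤ ⟪S s, s⟫ + ‖T - S‖ * ‖s‖ ^ 2 := by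
  calc ⟪T s, s⟫ = ⟪S s, s⟫ + ⟪(T - S) s, s⟫ := by simp [inner_sub_left]
    _ ≤ ⟪S s, s⟫ + ‖(T - S) s‖ * ‖s‖ := by gcongr; exact real_inner_le_norm _ _
    _ ≤ ⟪S s, s⟫ + ‖T - S‖ * ‖s‖ * ‖s‖ := by gcongr; exact (T - S).le_opNorm s
    _ = ⟪S s, s⟫ + ‖T - S‖ * ‖s‖ ^ 2 := by ring

theorem le_quadratic_model_add_cube [CompleteSpace E] (f : E → ℝ) (Hess : E → E →L[ℝ] E)
    (LH : ℝ) (hf : Differentiable ℝ f) (hHess : ∀ y, HasFDerivAt (gradient f) (Hess y) y)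
    (hLip : ∀ y z, ‖Hess y - Hess z‖ ≤ LH * ‖y - z‖) (x s : E) :
    f (x + s) ≤ f x + ⟪gradient f x, s⟫ + (1 / 2) * ⟪s, Hess x s⟫ + LH / 6 * ‖s‖ ^ 3 := by
  have hline : ∀ t : ℝ, HasDerivAt (fun t : ℝ => x + t • s) s t := fun t => by
    simpa using ((hasDerivAt_id t).smul_const s).const_add x
  have hφ : ∀ t : ℝ, HasDerivAt (fun t => f (x + t • s)) ⟪gradient f (x + t • s), s⟫ t :=
    fun t => by
      simpa [InnerProductSpace.toDual_apply_apply, Function.comp_def] using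
        (hf _).hasGradientAt.hasFDerivAt.comp_hasDerivAt t (hline t)
  have hφ' : ∀ t : ℝ, HasDerivAt (fun t => ⟪gradient f (x + t • s), s⟫)
      ⟪Hess (x + t • s) s, s⟫ t := fun t => by
    simpa using ((hHess _).comp_hasDerivAt t (hline t)).inner ℝ (hasDerivAt_const t s)
  have hφ'' : ∀ t : ℝ, 0 ≤ t →
      ⟪Hess (x + t • s) s, s⟫ ≤ ⟪Hess x s, s⟫ + LH * ‖s‖ ^ 3 * t := fun t ht => by
    have hdist : ‖Hess (x + t • s) - Hess x‖ ≤ LH * (t * ‖s‖) := by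
      simpa [norm_smul, abs_of_nonneg ht] using hLip (x + t • s) x
    have := inner_apply_le_inner_apply_add_norm_sub_mul (Hess (x + t • s)) (Hess x) s
    linarith [mul_le_mul_of_nonneg_right hdist (sq_nonneg ‖s‖)]
  have := le_cubic_model_of_hasDerivAt hφ hφ' hφ''
  simp only [one_smul, zero_smul, add_zero] at this
  rw [real_inner_comm (Hess x s)]
  linarith

variable (H : E →L[ℝ] E) (g s : E) {lam μ : ℝ}

theorem inner_regularized_residual :
    ⟪H s + (lam + μ) • s + g, s⟫ = ⟪s, H s⟫ + (lam + μ) * ‖s‖ ^ 2 + ⟪g, s⟫ := by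
  rw [inner_add_left, inner_add_left, real_inner_smul_left, real_inner_self_eq_norm_sq,
    real_inner_comm s]

theorem mul_norm_sq_le_model_decrease {ς : ℝ} (hμ : 0 ≤ μ) (hcurv : -μ * ‖s‖ ^ 2 ≤ ⟪s, H s⟫)
    (hres : ‖H s + (lam + μ) • s + g‖ ≤ ς * lam * ‖s‖) :
    (1 - ς) * lam * ‖s‖ ^ 2 ≤ -⟪g, s⟫ - (1 / 2) * ⟪s, H s⟫ := by
  have h := real_inner_le_norm (H s + (lam + μ) • s + g) s
  rw [inner_regularized_residual] at h
  nlinarith [mul_le_mul_of_nonneg_right hres (norm_nonneg s)]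

theorem mul_norm_le_of_regularized_residual {κ : ℝ} (hκ : 0 ≤ κ)
    (hcurv : -μ * ‖s‖ ^ 2 ≤ ⟪s, H s⟫) (hres : ‖H s + (lam + μ) • s + g‖ ≤ κ * ‖g‖) :
    lam * ‖s‖ ≤ (1 + κ) * ‖g‖ := by
  rcases (norm_nonneg s).eq_or_lt with hs | hs
  · rw [← hs, mul_zero]
    positivity
  have h := real_inner_le_norm (H s + (lam + μ) • s + g) s
  rw [inner_regularized_residual] at h
  have hgs := neg_le_of_abs_le (abs_real_inner_le_norm g s)
  refine le_of_mul_le_mul_right ?_ hs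
  nlinarith [mul_le_mul_of_nonneg_right hres (norm_nonneg s)]

end InnerProductSpace

theorem lamMin_mul_norm_sq_le_inner {n : ℕ}
    (T : EuclideanSpace ℝ (Fin n) →L[ℝ] EuclideanSpace ℝ (Fin n)) (s : EuclideanSpace ℝ (Fin n)) :
    lamMin (fun v => T v) * ‖s‖ ^ 2 ≤ ⟪s, T s⟫ := by
  rcases eq_or_ne s 0 with rfl | hs
  · simp
  have hbdd : BddBelow {r : ℝ | ∃ v : EuclideanSpace ℝ (Fin n), ‖v‖ = 1 ∧ ⟪v, T v⟫ = r} := by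
    refine ⟨-‖T‖, ?_⟩
    rintro r ⟨v, hv, rfl⟩
    have h := (abs_le.1 (abs_real_inner_le_norm v (T v))).1
    have := T.le_opNorm v
    rw [hv] at h this
    linarith
  set v := ‖s‖⁻¹ • s
  have hv : ‖v‖ = 1 := norm_smul_inv_norm hs
  have hle : lamMin (fun v => T v) ≤ ⟪v, T v⟫ := csInf_le hbdd ⟨v, hv, rfl⟩
  have hsv : s = ‖s‖ • v := by simp [v, smul_smul, norm_ne_zero_iff.2 hs]
  rw [hsv, map_smul, real_inner_smul_left, real_inner_smul_right, norm_smul,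
    hv, Real.norm_of_nonneg (norm_nonneg s)]
  linarith [mul_le_mul_of_nonneg_left hle (sq_nonneg ‖s‖)]

theorem very_successful_neig_step_general {n : ℕ}
    (f : EuclideanSpace ℝ (Fin n) → ℝ)
    (Hess : EuclideanSpace ℝ (Fin n) → EuclideanSpace ℝ (Fin n) →L[ℝ] EuclideanSpace ℝ (Fin n))
    (LH : ℝ) (hLH : 0 < LH)
    (hf : ContDiff ℝ 2 f)
    (hHess : ∀ y, HasFDerivAt (gradient f) (Hess y) y)
    (hLip : ∀ y z, ‖Hess y - Hess z‖ ≤ LH * ‖y - z‖)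
    (x s : EuclideanSpace ℝ (Fin n))
    (hg : gradient f x ≠ 0)
    (σ ς₃ κθ η₂ : ℝ) (hσ : 0 < σ) (hς₃1 : ς₃ < 1) (hκθ : 0 < κθ)
    (hη₂1 : η₂ < 1)
    (μ : ℝ) (hμ : μ = max (-(lamMin fun v => Hess x v)) 0)
    (hres : ‖Hess x s + (Real.sqrt (σ * ‖gradient f x‖) + μ) • s + gradient f x‖
      ≤ min (ς₃ * Real.sqrt (σ * ‖gradient f x‖) * ‖s‖) (κθ * ‖gradient f x‖))
    (hσbig : LH * (1 + κθ) / (6 * (1 - ς₃) * (1 - η₂)) ≤ σ) :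
    f x - f (x + s) ≥ η₂ * (-⟪gradient f x, s⟫ - (1 / 2) * ⟪s, Hess x s⟫) := by
  set g := gradient f x
  set lam := Real.sqrt (σ * ‖g‖)
  have hlam : 0 < lam := Real.sqrt_pos.2 (mul_pos hσ (norm_pos_iff.2 hg))
  have hlam_sq : lam ^ 2 = σ * ‖g‖ := Real.sq_sqrt (by positivity)
  have hcurv : -μ * ‖s‖ ^ 2 ≤ ⟪s, Hess x s⟫ := by
    have hμ_ge : -(lamMin fun v => Hess x v) ≤ μ := hμ ▸ le_max_left _ _
    linarith [lamMin_mul_norm_sq_le_inner (Hess x) s,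
      mul_le_mul_of_nonneg_right hμ_ge (sq_nonneg ‖s‖)]
  have hdecrease := mul_norm_sq_le_model_decrease (Hess x) g s (hμ ▸ le_max_right _ _) hcurv
    (hres.trans (min_le_left _ _))
  have hstep := mul_norm_le_of_regularized_residual (Hess x) g s hκθ.le hcurv
    (hres.trans (min_le_right _ _))
  have hσ' : LH * (1 + κθ) ≤ σ * (6 * (1 - ς₃) * (1 - η₂)) :=
    (div_le_iff₀ (mul_pos (mul_pos (by norm_num) (sub_pos.2 hς₃1)) (sub_pos.2 hη₂1))).1 hσbig
  have hLs : LH * ‖s‖ ≤ 6 * (1 - ς₃) * (1 - η₂) * lam := by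
    refine le_of_mul_le_mul_left ?_ hlam
    calc lam * (LH * ‖s‖) = LH * (lam * ‖s‖) := mul_left_comm _ _ _
      _ ≤ LH * ((1 + κθ) * ‖g‖) := mul_le_mul_of_nonneg_left hstep hLH.le
      _ ≤ σ * (6 * (1 - ς₃) * (1 - η₂)) * ‖g‖ := by
        rw [← mul_assoc]; exact mul_le_mul_of_nonneg_right hσ' (norm_nonneg g)
      _ = lam * (6 * (1 - ς₃) * (1 - η₂) * lam) := by
        linear_combination -(6 * (1 - ς₃) * (1 - η₂)) * hlam_sq
  have hcube : LH / 6 * ‖s‖ ^ 3 ≤ (1 - η₂) * (-⟪g, s⟫ - (1 / 2) * ⟪s, Hess x s⟫) := by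
    linarith [mul_le_mul_of_nonneg_right hLs (sq_nonneg ‖s‖),
      mul_le_mul_of_nonneg_left hdecrease (sub_nonneg.2 hη₂1.le)]
  have htaylor := le_quadratic_model_add_cube f Hess LH (hf.differentiable (by norm_num)) hHess
    hLip x s
  linarith

/-- Lemma 3.1 of the paper, regularized Newton step case: if the regularization
parameter is large enough, the iteration is very successful. -/
theorem very_successful_neig_step {n : ℕ}
    (f : EuclideanSpace ℝ (Fin n) → ℝ)
    (Hess : EuclideanSpace ℝ (Fin n) → EuclideanSpace ℝ (Fin n) →L[ℝ] EuclideanSpace ℝ (Fin n))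
    (LH : ℝ) (hLH : 0 < LH)
    (hf : ContDiff ℝ 2 f)
    (hHess : ∀ y, HasFDerivAt (gradient f) (Hess y) y)
    (hLip : ∀ y z, ‖Hess y - Hess z‖ ≤ LH * ‖y - z‖)
    (x s : EuclideanSpace ℝ (Fin n))
    (hg : gradient f x ≠ 0)
    (σ ς₃ κθ η₂ : ℝ) (hσ : 0 < σ) (hς₃0 : 0 ≤ ς₃) (hς₃1 : ς₃ < 1) (hκθ : 0 < κθ)
    (hη₂0 : 0 < η₂) (hη₂1 : η₂ < 1)
    (μ : ℝ) (hμ : μ = max (-(lamMin fun v => Hess x v)) 0)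
    (hres : ‖Hess x s + (Real.sqrt (σ * ‖gradient f x‖) + μ) • s + gradient f x‖
      ≤ min (ς₃ * Real.sqrt (σ * ‖gradient f x‖) * ‖s‖) (κθ * ‖gradient f x‖))
    (hσbig : LH * (1 + κθ) / (6 * (1 - ς₃) * (1 - η₂)) ≤ σ) :
    f x - f (x + s) ≥ η₂ * (-⟪gradient f x, s⟫ - (1 / 2) * ⟪s, Hess x s⟫) :=
  very_successful_neig_step_general f Hess LH hLH hf hHess hLip x s hg σ ς₃ κθ η₂ hσ hς₃1 hκθ hη₂1 μ
    hμ hres hσbig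
end

section
/- Let f : ℝⁿ → ℝ be twice continuously differentiable with L_H-Lipschitz Hessian, L_H > 0. Fix x ∈ ℝⁿ, set g := ∇f(x) and H := ∇²f(x), and suppose g ≠ 0. Let σ > 0, κ_a ≥ 1, ς₁ ∈ (0,1], ς₂ ∈ [0,1/2), κ_θ > 0, η₂ ∈ (0,1). Suppose H + √(κ_a σ‖g‖)·I is positive definite and s ∈ ℝⁿ satisfies ‖(H + √(κ_a σ‖g‖)·I)s + g‖ ≤ ς₂·√(κ_a σ‖g‖)·‖s‖ and ‖s‖ ≤ ((1+κ_θ)/ς₁)·√(‖g‖/(κ_a σ)). If σ ≥ L_H(1+κ_θ)/(3 κ_a ς₁ (1−2ς₂)(1−η₂)), then f(x) − f(x+s) ≥ η₂·(−⟨g,s⟩ − (1/2)⟨s,Hs⟩). -/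
/-! With μ = √(κa σ ‖g‖), testing the residual condition against s and using that H + μ I is
positive semidefinite bounds the model decrease m(s) = -⟪g, s⟫ - ½⟪s, H s⟫ below by
(½ - ς₂) μ ‖s‖². Taylor's theorem with a Lipschitz Hessian bounds the gap between the actual
and the predicted decrease by L_H ‖s‖³ / 6, and the step-length bound together with the lower
bound on σ gives L_H ‖s‖ ≤ 3 (1 - 2ς₂)(1 - η₂) μ, so this gap is at most (1 - η₂) m(s). -/

open RealInnerProductSpace

theorem norm_le_of_norm_hasDerivAt_le_pow {F : Type*} [NormedAddCommGroup F] [NormedSpace ℝ F]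
    {φ φ' : ℝ → F} {C : ℝ} (k : ℕ) (hφ : ∀ t, HasDerivAt φ (φ' t) t) (h0 : φ 0 = 0)
    (hbound : ∀ t ∈ Set.Ico (0 : ℝ) 1, ‖φ' t‖ ≤ C * t ^ k) :
    ‖φ 1‖ ≤ C / (k + 1) := by
  have hB : ∀ t : ℝ, HasDerivAt (fun u => C * u ^ (k + 1) / (k + 1)) (C * t ^ k) t := fun t => by
    refine (((hasDerivAt_pow (k + 1) t).const_mul C).div_const ((k : ℝ) + 1)).congr_deriv ?_
    rw [Nat.add_sub_cancel]
    push_cast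
    field_simp
  simpa using image_norm_le_of_norm_deriv_right_le_deriv_boundary
    (fun t _ => (hφ t).continuousAt.continuousWithinAt) (fun t _ => (hφ t).hasDerivWithinAt)
    (by simp [h0]) hB hbound (Set.right_mem_Icc.2 zero_le_one)

theorem norm_sub_sub_fderiv_le_of_lipschitz_fderiv {E F : Type*} [NormedAddCommGroup E]
    [NormedSpace ℝ E] [NormedAddCommGroup F] [NormedSpace ℝ F] {G : E → F} {G' : E → E →L[ℝ] F} {L : ℝ}
    (hG : ∀ y, HasFDerivAt G (G' y) y) (x : E) (hLip : ∀ y, ‖G' y - G' x‖ ≤ L * ‖y - x‖)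
    (s : E) : ‖G (x + s) - G x - G' x s‖ ≤ L / 2 * ‖s‖ ^ 2 := by
  have hline : ∀ t : ℝ, HasDerivAt (fun u : ℝ => x + u • s) s t := fun t => by
    simpa using ((hasDerivAt_id t).smul_const s).const_add x
  have hderiv : ∀ t : ℝ, HasDerivAt (fun u : ℝ => G (x + u • s) - G x - u • G' x s)
      ((G' (x + t • s) - G' x) s) t := fun t => by
    refine ((((hG _).comp_hasDerivAt t (hline t)).sub_const (G x)).sub
      ((hasDerivAt_id t).smul_const (G' x s))).congr_deriv ?_
    simp
  have hbound : ∀ t ∈ Set.Ico (0 : ℝ) 1,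
      ‖(G' (x + t • s) - G' x) s‖ ≤ L * ‖s‖ ^ 2 * t ^ 1 := fun t ht => calc
    ‖(G' (x + t • s) - G' x) s‖ ≤ ‖G' (x + t • s) - G' x‖ * ‖s‖ := ContinuousLinearMap.le_opNorm _ _
    _ ≤ L * ‖t • s‖ * ‖s‖ := by
      gcongr
      simpa using hLip (x + t • s)
    _ = L * ‖s‖ ^ 2 * t ^ 1 := by rw [norm_smul, Real.norm_of_nonneg ht.1]; ring
  have := norm_le_of_norm_hasDerivAt_le_pow 1 hderiv (by simp) hbound
  norm_num at this
  linarith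

theorem abs_sub_sub_inner_sub_half_inner_le_of_lipschitz_hessian {E : Type*}
    [NormedAddCommGroup E] [InnerProductSpace ℝ E] [CompleteSpace E]
    {f : E → ℝ} {G : E → E} {H : E → E →L[ℝ] E} {L : ℝ}
    (hf : ∀ y, HasGradientAt f (G y) y) (hG : ∀ y, HasFDerivAt G (H y) y) (x : E)
    (hLip : ∀ y, ‖H y - H x‖ ≤ L * ‖y - x‖) (s : E) :
    |f (x + s) - f x - ⟪G x, s⟫ - 1 / 2 * ⟪s, H x s⟫| ≤ L / 6 * ‖s‖ ^ 3 := by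
  have hline : ∀ t : ℝ, HasDerivAt (fun u : ℝ => x + u • s) s t := fun t => by
    simpa using ((hasDerivAt_id t).smul_const s).const_add x
  have hderiv : ∀ t : ℝ, HasDerivAt
      (fun u : ℝ => f (x + u • s) - f x - u * ⟪G x, s⟫ - u ^ 2 / 2 * ⟪s, H x s⟫)
      ⟪G (x + t • s) - G x - H x (t • s), s⟫ t := fun t => by
    have hf' := (hf (x + t • s)).hasFDerivAt.comp_hasDerivAt t (hline t)
    refine (((hf'.sub_const (f x)).sub ((hasDerivAt_id t).mul_const ⟪G x, s⟫)).sub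
      (((hasDerivAt_pow 2 t).div_const 2).mul_const ⟪s, H x s⟫)).congr_deriv ?_
    simp [inner_sub_left, real_inner_smul_left, real_inner_comm s (H x s)]
  have hbound : ∀ t ∈ Set.Ico (0 : ℝ) 1,
      ‖⟪G (x + t • s) - G x - H x (t • s), s⟫‖ ≤ L / 2 * ‖s‖ ^ 3 * t ^ 2 := fun t ht => calc
    ‖⟪G (x + t • s) - G x - H x (t • s), s⟫‖ ≤ ‖G (x + t • s) - G x - H x (t • s)‖ * ‖s‖ :=
      norm_inner_le_norm _ _
    _ ≤ L / 2 * ‖t • s‖ ^ 2 * ‖s‖ := by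
      gcongr
      exact norm_sub_sub_fderiv_le_of_lipschitz_fderiv hG x hLip (t • s)
    _ = L / 2 * ‖s‖ ^ 3 * t ^ 2 := by rw [norm_smul, Real.norm_of_nonneg ht.1]; ring
  have := norm_le_of_norm_hasDerivAt_le_pow 2 hderiv (by simp) hbound
  norm_num at this
  linarith

theorem mul_norm_sq_le_neg_inner_sub_half_inner {E : Type*}
    [NormedAddCommGroup E] [InnerProductSpace ℝ E] {g s v : E} {μ ς : ℝ}
    (hres : ‖v + μ • s + g‖ ≤ ς * μ * ‖s‖) (hpos : 0 ≤ ⟪s, v⟫ + μ * ‖s‖ ^ 2) :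
    (1 / 2 - ς) * μ * ‖s‖ ^ 2 ≤ -⟪g, s⟫ - 1 / 2 * ⟪s, v⟫ := by
  have hinner : ⟪v + μ • s + g, s⟫ ≤ ς * μ * ‖s‖ ^ 2 := calc
    ⟪v + μ • s + g, s⟫ ≤ ‖v + μ • s + g‖ * ‖s‖ := real_inner_le_norm _ _
    _ ≤ ς * μ * ‖s‖ * ‖s‖ := by gcongr
    _ = ς * μ * ‖s‖ ^ 2 := by ring
  rw [inner_add_left, inner_add_left, real_inner_smul_left, real_inner_self_eq_norm_sq,
    real_inner_comm] at hinner
  linarith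

theorem lipschitz_mul_le_of_regularization_ge {L r a σ κa ς₁ ς₂ κθ η₂ : ℝ} (hL : 0 ≤ L)
    (hσ : 0 < σ) (hκa : 0 < κa) (hς₁ : 0 < ς₁) (hς₂ : ς₂ < 1 / 2) (hη₂ : η₂ < 1)
    (hr : r ≤ ((1 + κθ) / ς₁) * Real.sqrt (a / (κa * σ)))
    (hσbig : L * (1 + κθ) / (3 * κa * ς₁ * (1 - 2 * ς₂) * (1 - η₂)) ≤ σ) :
    L * r ≤ 3 * (1 - 2 * ς₂) * (1 - η₂) * Real.sqrt (κa * σ * a) := by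
  have hsqrt : Real.sqrt (a / (κa * σ)) = Real.sqrt (κa * σ * a) / (κa * σ) := by
    rw [Real.sqrt_div' _ (by positivity), Real.sqrt_mul (by positivity) a, mul_div_right_comm,
      Real.sqrt_div_self', one_div_mul_eq_div]
  have h2 : 0 < 1 - 2 * ς₂ := by linarith
  have h3 : 0 < 1 - η₂ := by linarith
  calc L * r ≤ L * ((1 + κθ) / ς₁ * (Real.sqrt (κa * σ * a) / (κa * σ))) := by
        rw [← hsqrt]; gcongr
    _ = L * (1 + κθ) / (3 * κa * ς₁ * (1 - 2 * ς₂) * (1 - η₂))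
        * (3 * (1 - 2 * ς₂) * (1 - η₂) * Real.sqrt (κa * σ * a) / σ) := by
        field_simp
    _ ≤ σ * (3 * (1 - 2 * ς₂) * (1 - η₂) * Real.sqrt (κa * σ * a) / σ) := by gcongr
    _ = 3 * (1 - 2 * ς₂) * (1 - η₂) * Real.sqrt (κa * σ * a) := by field_simp

theorem very_successful_convex_step_general {n : ℕ}
    (f : EuclideanSpace ℝ (Fin n) → ℝ)
    (Hess : EuclideanSpace ℝ (Fin n) → EuclideanSpace ℝ (Fin n) →L[ℝ] EuclideanSpace ℝ (Fin n))
    (LH : ℝ) (hLH : 0 < LH)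
    (hf : ContDiff ℝ 2 f)
    (hHess : ∀ y, HasFDerivAt (gradient f) (Hess y) y)
    (hLip : ∀ y z, ‖Hess y - Hess z‖ ≤ LH * ‖y - z‖)
    (x s : EuclideanSpace ℝ (Fin n))
    (σ κa ς₁ ς₂ κθ η₂ : ℝ) (hσ : 0 < σ) (hκa : 1 ≤ κa)
    (hς₁0 : 0 < ς₁) (hς₂1 : ς₂ < 1 / 2) (hη₂1 : η₂ < 1)
    (hpd : ∀ w : EuclideanSpace ℝ (Fin n), w ≠ 0 →
      0 < ⟪w, Hess x w⟫ + Real.sqrt (κa * σ * ‖gradient f x‖) * ‖w‖ ^ 2)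
    (hres : ‖Hess x s + Real.sqrt (κa * σ * ‖gradient f x‖) • s + gradient f x‖
      ≤ ς₂ * Real.sqrt (κa * σ * ‖gradient f x‖) * ‖s‖)
    (hslen : ‖s‖ ≤ ((1 + κθ) / ς₁) * Real.sqrt (‖gradient f x‖ / (κa * σ)))
    (hσbig : LH * (1 + κθ) / (3 * κa * ς₁ * (1 - 2 * ς₂) * (1 - η₂)) ≤ σ) :
    f x - f (x + s) ≥ η₂ * (-⟪gradient f x, s⟫ - (1 / 2) * ⟪s, Hess x s⟫) := by
  set g := gradient f x
  set μ := Real.sqrt (κa * σ * ‖g‖)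
  have hpos : 0 ≤ ⟪s, Hess x s⟫ + μ * ‖s‖ ^ 2 := by
    rcases eq_or_ne s 0 with rfl | hs
    · simp
    · exact (hpd s hs).le
  have hdecrease := mul_norm_sq_le_neg_inner_sub_half_inner hres hpos
  have hstep := lipschitz_mul_le_of_regularization_ge hLH.le hσ (by linarith) hς₁0 hς₂1 hη₂1
    hslen hσbig
  have htaylor := (abs_le.1 (abs_sub_sub_inner_sub_half_inner_le_of_lipschitz_hessian
    (fun y => (hf.differentiable (by norm_num) y).hasGradientAt) hHess x (fun y => hLip y x) s)).2
  have hcubic : LH / 6 * ‖s‖ ^ 3 ≤ (1 - η₂) * (-⟪g, s⟫ - 1 / 2 * ⟪s, Hess x s⟫) := calc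
    LH / 6 * ‖s‖ ^ 3 = LH * ‖s‖ * ‖s‖ ^ 2 / 6 := by ring
    _ ≤ 3 * (1 - 2 * ς₂) * (1 - η₂) * μ * ‖s‖ ^ 2 / 6 := by gcongr
    _ = (1 - η₂) * ((1 / 2 - ς₂) * μ * ‖s‖ ^ 2) := by ring
    _ ≤ (1 - η₂) * (-⟪g, s⟫ - 1 / 2 * ⟪s, Hess x s⟫) := by gcongr
  linarith

/-- Lemma 3.1 of the paper, convex-type step case: if the regularization
parameter is large enough, the iteration is very successful. -/
theorem very_successful_convex_step {n : ℕ}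
    (f : EuclideanSpace ℝ (Fin n) → ℝ)
    (Hess : EuclideanSpace ℝ (Fin n) → EuclideanSpace ℝ (Fin n) →L[ℝ] EuclideanSpace ℝ (Fin n))
    (LH : ℝ) (hLH : 0 < LH)
    (hf : ContDiff ℝ 2 f)
    (hHess : ∀ y, HasFDerivAt (gradient f) (Hess y) y)
    (hLip : ∀ y z, ‖Hess y - Hess z‖ ≤ LH * ‖y - z‖)
    (x s : EuclideanSpace ℝ (Fin n))
    (hg : gradient f x ≠ 0)
    (σ κa ς₁ ς₂ κθ η₂ : ℝ) (hσ : 0 < σ) (hκa : 1 ≤ κa)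
    (hς₁0 : 0 < ς₁) (hς₁1 : ς₁ ≤ 1) (hς₂0 : 0 ≤ ς₂) (hς₂1 : ς₂ < 1 / 2) (hκθ : 0 < κθ)
    (hη₂0 : 0 < η₂) (hη₂1 : η₂ < 1)
    (hpd : ∀ w : EuclideanSpace ℝ (Fin n), w ≠ 0 →
      0 < ⟪w, Hess x w⟫ + Real.sqrt (κa * σ * ‖gradient f x‖) * ‖w‖ ^ 2)
    (hres : ‖Hess x s + Real.sqrt (κa * σ * ‖gradient f x‖) • s + gradient f x‖
      ≤ ς₂ * Real.sqrt (κa * σ * ‖gradient f x‖) * ‖s‖)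
    (hslen : ‖s‖ ≤ ((1 + κθ) / ς₁) * Real.sqrt (‖gradient f x‖ / (κa * σ)))
    (hσbig : LH * (1 + κθ) / (3 * κa * ς₁ * (1 - 2 * ς₂) * (1 - η₂)) ≤ σ) :
    f x - f (x + s) ≥ η₂ * (-⟪gradient f x, s⟫ - (1 / 2) * ⟪s, Hess x s⟫) :=
  very_successful_convex_step_general f Hess LH hLH hf hHess hLip x s σ κa ς₁ ς₂ κθ η₂ hσ hκa hς₁0
    hς₂1 hη₂1 hpd hres hslen hσbig
end

section
/- Let f : ℝⁿ → ℝ be twice continuously differentiable with L_H-Lipschitz Hessian, L_H > 0. Fix x ∈ ℝⁿ, set g := ∇f(x) and H := ∇²f(x), and suppose g ≠ 0. Let σ > 0, κ_C > 0, η₂ ∈ (0,1), and let v ∈ ℝⁿ satisfy ‖v‖ = 1, ⟨g,v⟩ ≤ 0 and ⟨v,Hv⟩ ≤ −κ_C·√(σ‖g‖). Set s := (κ_C·√(σ‖g‖)/σ)·v. If σ ≥ L_H/(3(1−η₂)), then f(x) − f(x+s) ≥ η₂·(−⟨g,s⟩ − (1/2)⟨s,Hs⟩). -/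
/-!
Along the segment `t ↦ x + t • s` the second derivative of `f` drifts from `⟪s, H s⟫` by at most
`L_H t ‖s‖³`, so two comparison arguments give the cubic upper model
`f (x + s) ≤ f x + ⟪g, s⟫ + ⟪s, H s⟫ / 2 + L_H ‖s‖³ / 6`.
For the negative-curvature step `s = α v` with `α = κ_C √(σ‖g‖) / σ`, the predicted decrease
`m = -⟪g, s⟫ - ⟪s, H s⟫ / 2` is at least `σ α³ / 2`, so when `L_H ≤ 3 (1 - η₂) σ` the cubic error
`L_H α³ / 6` is at most `(1 - η₂) m`.
-/

open RealInnerProductSpace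

theorem image_le_of_deriv_le_deriv_of_nonneg {f f' B B' : ℝ → ℝ}
    (hf : ∀ τ, HasDerivAt f (f' τ) τ) (hB : ∀ τ, HasDerivAt B (B' τ) τ) (h0 : f 0 ≤ B 0)
    (hle : ∀ τ, 0 ≤ τ → f' τ ≤ B' τ) {t : ℝ} (ht : 0 ≤ t) : f t ≤ B t :=
  image_le_of_deriv_right_le_deriv_boundary (a := 0) (b := t)
    (fun τ _ => (hf τ).continuousAt.continuousWithinAt) (fun τ _ => (hf τ).hasDerivWithinAt) h0
    (fun τ _ => (hB τ).continuousAt.continuousWithinAt) (fun τ _ => (hB τ).hasDerivWithinAt)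
    (fun τ hτ => hle τ hτ.1) ⟨ht, le_rfl⟩

theorem le_taylor_cubic_of_deriv2_sub_le {φ φ' φ'' : ℝ → ℝ} {L t : ℝ}
    (hφ : ∀ τ, HasDerivAt φ (φ' τ) τ) (hφ' : ∀ τ, HasDerivAt φ' (φ'' τ) τ)
    (hL : ∀ τ, 0 ≤ τ → φ'' τ - φ'' 0 ≤ L * τ) (ht : 0 ≤ t) :
    φ t ≤ φ 0 + φ' 0 * t + φ'' 0 / 2 * t ^ 2 + L / 6 * t ^ 3 := by
  have hB' : ∀ τ, HasDerivAt (fun τ => φ' 0 + φ'' 0 * τ + L / 2 * τ ^ 2) (φ'' 0 + L * τ) τ :=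
    fun τ => (((hasDerivAt_id' τ).const_mul (φ'' 0)).const_add (φ' 0) |>.fun_add
      ((hasDerivAt_pow 2 τ).const_mul (L / 2))).congr_deriv (by norm_num; ring)
  have hB : ∀ τ, HasDerivAt (fun τ => φ 0 + φ' 0 * τ + φ'' 0 / 2 * τ ^ 2 + L / 6 * τ ^ 3)
      (φ' 0 + φ'' 0 * τ + L / 2 * τ ^ 2) τ :=
    fun τ => ((((hasDerivAt_id' τ).const_mul (φ' 0)).const_add (φ 0) |>.fun_add
      ((hasDerivAt_pow 2 τ).const_mul (φ'' 0 / 2))).fun_add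
      ((hasDerivAt_pow 3 τ).const_mul (L / 6))).congr_deriv (by norm_num; ring)
  have hderiv : ∀ τ, 0 ≤ τ → φ' τ ≤ φ' 0 + φ'' 0 * τ + L / 2 * τ ^ 2 := fun τ hτ =>
    image_le_of_deriv_le_deriv_of_nonneg hφ' hB' (by simp) (fun r hr => by linarith [hL r hr]) hτ
  exact image_le_of_deriv_le_deriv_of_nonneg hφ hB (by simp) hderiv ht

section InnerProductSpace

variable {E : Type*} [NormedAddCommGroup E] [InnerProductSpace ℝ E]

theorem le_neg_inner_sub_half_inner_of_inner_le_neg {g v : E} {A : E →L[ℝ] E} {α c : ℝ}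
    (hα : 0 ≤ α) (hgv : ⟪g, v⟫ ≤ 0) (hcurv : ⟪v, A v⟫ ≤ -c) :
    α ^ 2 * c / 2 ≤ -⟪g, α • v⟫ - 1 / 2 * ⟪α • v, A (α • v)⟫ := by
  rw [map_smul, real_inner_smul_left, real_inner_smul_right, real_inner_smul_right]
  nlinarith [mul_nonneg hα (neg_nonneg.2 hgv), mul_le_mul_of_nonneg_left hcurv (sq_nonneg α)]

theorem le_taylor_cubic_of_lipschitz_hessian [CompleteSpace E] {f : E → ℝ}
    {Hess : E → E →L[ℝ] E} {L : ℝ}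
    (hf : Differentiable ℝ f) (hHess : ∀ y, HasFDerivAt (gradient f) (Hess y) y)
    (hLip : ∀ y z, ‖Hess y - Hess z‖ ≤ L * ‖y - z‖) (x s : E) :
    f (x + s) ≤ f x + ⟪gradient f x, s⟫ + 1 / 2 * ⟪s, Hess x s⟫ + L / 6 * ‖s‖ ^ 3 := by
  have hline : ∀ t : ℝ, HasDerivAt (fun t : ℝ => x + t • s) s t := fun t => by
    simpa using ((hasDerivAt_id t).smul_const s).const_add x
  have hφ : ∀ t : ℝ, HasDerivAt (fun t => f (x + t • s)) ⟪gradient f (x + t • s), s⟫ t :=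
    fun t => by
      simpa only [Function.comp_def, InnerProductSpace.toDual_apply_apply] using
        (hf (x + t • s)).hasGradientAt.hasFDerivAt.comp_hasDerivAt t (hline t)
  have hφ' : ∀ t : ℝ, HasDerivAt (fun t => ⟪gradient f (x + t • s), s⟫)
      ⟪Hess (x + t • s) s, s⟫ t :=
    fun t => by
      simpa using ((hHess (x + t • s)).comp_hasDerivAt t (hline t)).inner ℝ (hasDerivAt_const t s)
  have hcurv : ∀ t : ℝ, 0 ≤ t →
      ⟪Hess (x + t • s) s, s⟫ - ⟪Hess (x + (0 : ℝ) • s) s, s⟫ ≤ L * ‖s‖ ^ 3 * t := by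
    intro t ht
    calc ⟪Hess (x + t • s) s, s⟫ - ⟪Hess (x + (0 : ℝ) • s) s, s⟫
        = ⟪(Hess (x + t • s) - Hess x) s, s⟫ := by simp [inner_sub_left]
      _ ≤ ‖Hess (x + t • s) - Hess x‖ * ‖s‖ * ‖s‖ :=
        (real_inner_le_norm _ _).trans (by gcongr; exact ContinuousLinearMap.le_opNorm _ _)
      _ ≤ L * ‖t • s‖ * ‖s‖ * ‖s‖ := by
        gcongr; simpa using hLip (x + t • s) x
      _ = L * ‖s‖ ^ 3 * t := by rw [norm_smul, Real.norm_of_nonneg ht]; ring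
  have htaylor := le_taylor_cubic_of_deriv2_sub_le hφ hφ' hcurv zero_le_one
  simp only [zero_smul, add_zero, one_smul, mul_one, one_pow] at htaylor
  rw [real_inner_comm s (Hess x s)] at htaylor
  linarith

end InnerProductSpace

theorem very_successful_curv_step_general {n : ℕ}
    (f : EuclideanSpace ℝ (Fin n) → ℝ)
    (Hess : EuclideanSpace ℝ (Fin n) → EuclideanSpace ℝ (Fin n) →L[ℝ] EuclideanSpace ℝ (Fin n))
    (LH : ℝ)
    (hf : ContDiff ℝ 2 f)
    (hHess : ∀ y, HasFDerivAt (gradient f) (Hess y) y)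
    (hLip : ∀ y z, ‖Hess y - Hess z‖ ≤ LH * ‖y - z‖)
    (x : EuclideanSpace ℝ (Fin n))
    (σ κC η₂ : ℝ) (hσ : 0 < σ) (hκC : 0 < κC) (hη₂1 : η₂ < 1)
    (v : EuclideanSpace ℝ (Fin n)) (hv : ‖v‖ = 1) (hgv : ⟪gradient f x, v⟫ ≤ 0)
    (hcurv : ⟪v, Hess x v⟫ ≤ -κC * Real.sqrt (σ * ‖gradient f x‖))
    (s : EuclideanSpace ℝ (Fin n))
    (hs : s = (κC * Real.sqrt (σ * ‖gradient f x‖) / σ) • v)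
    (hσbig : LH / (3 * (1 - η₂)) ≤ σ) :
    f x - f (x + s) ≥ η₂ * (-⟪gradient f x, s⟫ - (1 / 2) * ⟪s, Hess x s⟫) := by
  set α := κC * Real.sqrt (σ * ‖gradient f x‖) / σ with hα
  have hα0 : 0 ≤ α := by positivity
  have hnorm : ‖s‖ = α := by rw [hs, norm_smul, hv, mul_one, Real.norm_of_nonneg hα0]
  have htaylor := le_taylor_cubic_of_lipschitz_hessian (hf.differentiable (by norm_num))
    hHess hLip x s
  have hmodel : α ^ 2 * (σ * α) / 2 ≤ -⟪gradient f x, s⟫ - 1 / 2 * ⟪s, Hess x s⟫ := by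
    rw [hs]
    refine le_neg_inner_sub_half_inner_of_inner_le_neg hα0 hgv ?_
    rwa [hα, mul_div_cancel₀ _ hσ.ne', ← neg_mul]
  have hLH : LH ≤ σ * (3 * (1 - η₂)) := (div_le_iff₀ (by linarith)).1 hσbig
  rw [hnorm] at htaylor
  linarith [mul_le_mul_of_nonneg_left hmodel (sub_nonneg.2 hη₂1.le),
    mul_le_mul_of_nonneg_right hLH (pow_nonneg hα0 3)]

/-- Lemma 3.1 of the paper, negative-curvature step case: if the regularization
parameter is large enough, the iteration is very successful. -/
theorem very_successful_curv_step {n : ℕ}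
    (f : EuclideanSpace ℝ (Fin n) → ℝ)
    (Hess : EuclideanSpace ℝ (Fin n) → EuclideanSpace ℝ (Fin n) →L[ℝ] EuclideanSpace ℝ (Fin n))
    (LH : ℝ) (hLH : 0 < LH)
    (hf : ContDiff ℝ 2 f)
    (hHess : ∀ y, HasFDerivAt (gradient f) (Hess y) y)
    (hLip : ∀ y z, ‖Hess y - Hess z‖ ≤ LH * ‖y - z‖)
    (x : EuclideanSpace ℝ (Fin n))
    (hg : gradient f x ≠ 0)
    (σ κC η₂ : ℝ) (hσ : 0 < σ) (hκC : 0 < κC) (hη₂0 : 0 < η₂) (hη₂1 : η₂ < 1)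
    (v : EuclideanSpace ℝ (Fin n)) (hv : ‖v‖ = 1) (hgv : ⟪gradient f x, v⟫ ≤ 0)
    (hcurv : ⟪v, Hess x v⟫ ≤ -κC * Real.sqrt (σ * ‖gradient f x‖))
    (s : EuclideanSpace ℝ (Fin n))
    (hs : s = (κC * Real.sqrt (σ * ‖gradient f x‖) / σ) • v)
    (hσbig : LH / (3 * (1 - η₂)) ≤ σ) :
    f x - f (x + s) ≥ η₂ * (-⟪gradient f x, s⟫ - (1 / 2) * ⟪s, Hess x s⟫) :=
  very_successful_curv_step_general f Hess LH hf hHess hLip x σ κC η₂ hσ hκC hη₂1 v hv hgv hcurv s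
    hs hσbig
end

section
/- Let f : ℝⁿ → ℝ, x ∈ ℝⁿ, g ∈ ℝⁿ with g ≠ 0, H a real symmetric n×n matrix, σ > 0, κ_C > 0, η₁ > 0, ε > 0 and σ_max ≥ σ. Suppose ‖g‖ ≥ ε, and let v ∈ ℝⁿ satisfy ‖v‖ = 1, ⟨g,v⟩ ≤ 0 and ⟨v,Hv⟩ ≤ −κ_C·√(σ‖g‖). Set s := (κ_C·√(σ‖g‖)/σ)·v and suppose the acceptance condition f(x) − f(x+s) ≥ η₁·(−⟨g,s⟩ − (1/2)⟨s,Hs⟩) holds. Then f(x) − f(x+s) ≥ (η₁ κ_C³/(2√σ_max))·ε^{3/2}. -/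
open RealInnerProductSpace

/-- Lemma 3.2 of the paper, inequality (3.7): function decrease at a successful
negative-curvature iteration. -/
theorem decrease_successful_curv_step {n : ℕ}
    (f : EuclideanSpace ℝ (Fin n) → ℝ) (x g : EuclideanSpace ℝ (Fin n)) (hg : g ≠ 0)
    (H : Matrix (Fin n) (Fin n) ℝ) (hH : H.IsHermitian)
    (σ κC η₁ ε σmax : ℝ) (hσ : 0 < σ) (hκC : 0 < κC) (hη₁ : 0 < η₁) (hε : 0 < ε)
    (hσmax : σ ≤ σmax) (hgε : ε ≤ ‖g‖)
    (v : EuclideanSpace ℝ (Fin n)) (hv : ‖v‖ = 1) (hgv : ⟪g, v⟫ ≤ 0)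
    (hcurv : ⟪v, Matrix.toEuclideanLin H v⟫ ≤ -κC * Real.sqrt (σ * ‖g‖))
    (s : EuclideanSpace ℝ (Fin n)) (hs : s = (κC * Real.sqrt (σ * ‖g‖) / σ) • v)
    (hacc : f x - f (x + s)
      ≥ η₁ * (-⟪g, s⟫ - (1 / 2) * ⟪s, Matrix.toEuclideanLin H s⟫)) :
    f x - f (x + s) ≥ (η₁ * κC ^ 3 / (2 * Real.sqrt σmax)) * ε ^ ((3 : ℝ) / 2) := by
  have hA : (0:ℝ) < ‖g‖ := lt_of_lt_of_le hε hgε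
  set A := ‖g‖ with hAdef
  have hst : 0 < Real.sqrt (σ * A) := Real.sqrt_pos.mpr (by positivity)
  set c := κC * Real.sqrt (σ * A) / σ with hcdef
  have hc : 0 < c := by positivity
  have hgs : ⟪g, s⟫ = c * ⟪g, v⟫ := by rw [hs]; exact real_inner_smul_right _ _ _
  have hHs : ⟪s, Matrix.toEuclideanLin H s⟫ = c ^ 2 * ⟪v, Matrix.toEuclideanLin H v⟫ := by
    rw [hs, map_smul, real_inner_smul_left, real_inner_smul_right]; ring
  have key : f x - f (x + s) ≥ η₁ * ((1/2) * c ^ 2 * (κC * Real.sqrt (σ * A))) := by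
    refine le_trans ?_ hacc
    have h1 : 0 ≤ -(c * ⟪g, v⟫) := by nlinarith
    have h2 : c ^ 2 * (-κC * Real.sqrt (σ * A)) ≥ c ^ 2 * ⟪v, Matrix.toEuclideanLin H v⟫ :=
      mul_le_mul_of_nonneg_left hcurv (sq_nonneg c)
    rw [hgs, hHs]
    have : (1/2) * c ^ 2 * (κC * Real.sqrt (σ * A)) ≤
        -(c * ⟪g, v⟫) - 1/2 * (c ^ 2 * ⟪v, Matrix.toEuclideanLin H v⟫) := by nlinarith
    calc η₁ * ((1/2) * c ^ 2 * (κC * Real.sqrt (σ * A)))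
        ≤ η₁ * (-(c * ⟪g, v⟫) - 1/2 * (c ^ 2 * ⟪v, Matrix.toEuclideanLin H v⟫)) :=
          mul_le_mul_of_nonneg_left this hη₁.le
      _ = _ := by ring
  -- compute the constant
  have hsplit : Real.sqrt (σ * A) = Real.sqrt σ * Real.sqrt A := Real.sqrt_mul hσ.le A
  have hσsq : Real.sqrt σ * Real.sqrt σ = σ := Real.mul_self_sqrt hσ.le
  have hAsq : Real.sqrt A * Real.sqrt A = A := Real.mul_self_sqrt hA.le
  have hσs : 0 < Real.sqrt σ := Real.sqrt_pos.mpr hσ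
  have hval : η₁ * ((1/2) * c ^ 2 * (κC * Real.sqrt (σ * A)))
      = η₁ * κC ^ 3 * (A * Real.sqrt A) / (2 * Real.sqrt σ) := by
    rw [hcdef, hsplit]
    obtain ⟨u, hu⟩ : ∃ u, Real.sqrt σ = u := ⟨_, rfl⟩
    obtain ⟨w, hw⟩ : ∃ w, Real.sqrt A = w := ⟨_, rfl⟩
    rw [hu] at hσsq ⊢
    rw [hw] at hAsq ⊢
    rw [hu] at hσs
    rw [← hσsq, ← hAsq]
    field_simp
  have hrp : ε ^ ((3:ℝ)/2) = ε * Real.sqrt ε := by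
    rw [show (3:ℝ)/2 = 1 + 1/2 by norm_num, Real.rpow_add hε, Real.rpow_one,
      ← Real.sqrt_eq_rpow]
  have hmono : ε * Real.sqrt ε ≤ A * Real.sqrt A :=
    mul_le_mul hgε (Real.sqrt_le_sqrt hgε) (Real.sqrt_nonneg ε) hA.le
  have hden : Real.sqrt σ ≤ Real.sqrt σmax := Real.sqrt_le_sqrt hσmax
  have hfinal : (η₁ * κC ^ 3 / (2 * Real.sqrt σmax)) * ε ^ ((3 : ℝ) / 2)
      ≤ η₁ * κC ^ 3 * (A * Real.sqrt A) / (2 * Real.sqrt σ) := by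
    rw [hrp, div_mul_eq_mul_div]
    exact div_le_div₀ (by positivity)
      (mul_le_mul_of_nonneg_left hmono (by positivity))
      (by positivity) (by linarith)
  rw [hval] at key
  linarith
end

section
/- Let f : ℝⁿ → ℝ be twice continuously differentiable with L_H-Lipschitz Hessian. Fix x ∈ ℝⁿ, set g := ∇f(x) and H := ∇²f(x). Let κ_B > 0 with ‖H‖ ≤ κ_B, let σ > 0, κ_C > 0, ε > 0 with ‖g‖ ≥ ε, and let v ∈ ℝⁿ satisfy ‖v‖ = 1, ⟨g,v⟩ ≤ 0 and ⟨v,Hv⟩ ≤ −κ_C·√(σ‖g‖). Set s := (κ_C·√(σ‖g‖)/σ)·v. Then ‖∇f(x+s)‖ ≤ (L_H κ_C²/(2σ) + κ_B κ_C/√(ε σ) + 1)·‖g‖. -/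
/-!
A Lipschitz Hessian makes the first-order Taylor model of the gradient accurate up to
`L_H ‖s‖² / 2`, so `‖∇f(x + s)‖ ≤ ‖g‖ + ‖H‖ ‖s‖ + L_H ‖s‖² / 2`. For the curvature step
`‖s‖ = κ_C √(σ‖g‖) / σ`, the quadratic term is exactly `L_H κ_C² ‖g‖ / (2σ)`, and `‖g‖ ≥ ε`
gives `‖s‖ = κ_C ‖g‖ / √(σ‖g‖) ≤ κ_C ‖g‖ / √(εσ)` for the linear one.
-/

open RealInnerProductSpace

section TaylorRemainder

variable {E F : Type*} [NormedAddCommGroup E] [NormedSpace ℝ E]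
  [NormedAddCommGroup F] [NormedSpace ℝ F]

theorem norm_image_add_sub_sub_fderiv_le_of_lipschitz {g : E → F} {g' : E → E →L[ℝ] F}
    {L : ℝ} (hg : ∀ y, HasFDerivAt g (g' y) y) (hL : ∀ y z, ‖g' y - g' z‖ ≤ L * ‖y - z‖)
    (x s : E) : ‖g (x + s) - g x - g' x s‖ ≤ L / 2 * ‖s‖ ^ 2 := by
  -- Fence the remainder along the segment by `L ‖s‖² t² / 2`, whose derivative dominates `‖φ'‖`.
  let φ : ℝ → F := fun t => g (x + t • s) - g x - t • g' x s
  have hφ : ∀ t, HasDerivAt φ (g' (x + t • s) s - g' x s) t := by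
    intro t
    have hline : HasDerivAt (fun t : ℝ => x + t • s) s t := by
      simpa using ((hasDerivAt_id t).smul_const s).const_add x
    have := (((hg _).comp_hasDerivAt t hline).sub_const (g x)).sub
      ((hasDerivAt_id t).smul_const (g' x s))
    rwa [one_smul] at this
  have hB : ∀ t, HasDerivAt (fun t : ℝ => L / 2 * ‖s‖ ^ 2 * t ^ 2) (L * ‖s‖ ^ 2 * t) t := by
    intro t
    refine ((hasDerivAt_pow 2 t).const_mul (L / 2 * ‖s‖ ^ 2)).congr_deriv ?_
    ring
  have bound : ∀ t ∈ Set.Ico (0 : ℝ) 1, ‖g' (x + t • s) s - g' x s‖ ≤ L * ‖s‖ ^ 2 * t := by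
    intro t ht
    calc ‖g' (x + t • s) s - g' x s‖ = ‖(g' (x + t • s) - g' x) s‖ := rfl
      _ ≤ ‖g' (x + t • s) - g' x‖ * ‖s‖ :=
          (g' (x + t • s) - g' x).le_opNorm s
      _ ≤ L * ‖x + t • s - x‖ * ‖s‖ := by gcongr; exact hL _ _
      _ = L * ‖s‖ ^ 2 * t := by
          rw [add_sub_cancel_left, norm_smul, Real.norm_of_nonneg ht.1]; ring
  have := image_norm_le_of_norm_deriv_right_le_deriv_boundary (a := 0) (b := 1)
    (fun t _ => (hφ t).continuousAt.continuousWithinAt) (fun t _ => (hφ t).hasDerivWithinAt)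
    (by simp [φ]) hB bound (Set.right_mem_Icc.mpr zero_le_one)
  simpa [φ] using this

theorem norm_image_add_le_of_lipschitz_fderiv {g : E → F} {g' : E → E →L[ℝ] F}
    {L : ℝ} (hg : ∀ y, HasFDerivAt g (g' y) y) (hL : ∀ y z, ‖g' y - g' z‖ ≤ L * ‖y - z‖)
    (x s : E) : ‖g (x + s)‖ ≤ ‖g x‖ + ‖g' x‖ * ‖s‖ + L / 2 * ‖s‖ ^ 2 := by
  have hrem := norm_image_add_sub_sub_fderiv_le_of_lipschitz hg hL x s
  calc ‖g (x + s)‖ = ‖g x + g' x s + (g (x + s) - g x - g' x s)‖ := by congr 1; abel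
    _ ≤ ‖g x‖ + ‖g' x s‖ + ‖g (x + s) - g x - g' x s‖ := norm_add₃_le
    _ ≤ ‖g x‖ + ‖g' x‖ * ‖s‖ + L / 2 * ‖s‖ ^ 2 := by gcongr; exact (g' x).le_opNorm s

end TaylorRemainder

theorem sq_curvature_step_length {κ σ G : ℝ} (hσ : 0 < σ) (hG : 0 ≤ G) :
    (κ * √(σ * G) / σ) ^ 2 = κ ^ 2 * G / σ := by
  rw [div_pow, mul_pow, Real.sq_sqrt (by positivity)]
  field_simp

theorem curvature_step_length_le {κ σ ε G : ℝ} (hκ : 0 ≤ κ) (hσ : 0 < σ) (hε : 0 < ε)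
    (hεG : ε ≤ G) : κ * √(σ * G) / σ ≤ κ / √(ε * σ) * G := by
  have hG : 0 < G := hε.trans_le hεG
  have hεσ : 0 < √(ε * σ) := by positivity
  have hsq : √(σ * G) * √(σ * G) = σ * G := Real.mul_self_sqrt (by positivity)
  have hmono : √(ε * σ) ≤ √(σ * G) := Real.sqrt_le_sqrt (by rw [mul_comm]; gcongr)
  rw [div_mul_eq_mul_div, div_le_div_iff₀ hσ hεσ]
  calc κ * √(σ * G) * √(ε * σ) ≤ κ * √(σ * G) * √(σ * G) := by gcongr
    _ = κ * G * σ := by rw [mul_assoc, hsq]; ring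

theorem gradient_growth_curv_step_general {n : ℕ}
    (f : EuclideanSpace ℝ (Fin n) → ℝ)
    (Hess : EuclideanSpace ℝ (Fin n) → EuclideanSpace ℝ (Fin n) →L[ℝ] EuclideanSpace ℝ (Fin n))
    (LH : ℝ)
    (hHess : ∀ y, HasFDerivAt (gradient f) (Hess y) y)
    (hLip : ∀ y z, ‖Hess y - Hess z‖ ≤ LH * ‖y - z‖)
    (x : EuclideanSpace ℝ (Fin n))
    (κB : ℝ) (hHB : ‖Hess x‖ ≤ κB)
    (σ κC ε : ℝ) (hσ : 0 < σ) (hκC : 0 < κC) (hε : 0 < ε) (hgε : ε ≤ ‖gradient f x‖)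
    (v : EuclideanSpace ℝ (Fin n)) (hv : ‖v‖ = 1)
    (s : EuclideanSpace ℝ (Fin n))
    (hs : s = (κC * Real.sqrt (σ * ‖gradient f x‖) / σ) • v) :
    ‖gradient f (x + s)‖
      ≤ (LH * κC ^ 2 / (2 * σ) + κB * κC / Real.sqrt (ε * σ) + 1) * ‖gradient f x‖ := by
  set G := ‖gradient f x‖
  have hs_norm : ‖s‖ = κC * √(σ * G) / σ := by
    rw [hs, norm_smul, hv, mul_one, Real.norm_of_nonneg (by positivity)]
  calc ‖gradient f (x + s)‖ ≤ G + ‖Hess x‖ * ‖s‖ + LH / 2 * ‖s‖ ^ 2 :=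
        norm_image_add_le_of_lipschitz_fderiv hHess hLip x s
    _ ≤ G + κB * (κC / √(ε * σ) * G) + LH / 2 * (κC ^ 2 * G / σ) := by
        rw [hs_norm, sq_curvature_step_length hσ (norm_nonneg _)]
        gcongr
        · exact (norm_nonneg _).trans hHB
        · exact curvature_step_length_le hκC.le hσ hε hgε
    _ = _ := by ring

/-- Lemma 3.2 of the paper, inequality (3.8): gradient growth after a
negative-curvature step. -/
theorem gradient_growth_curv_step {n : ℕ}
    (f : EuclideanSpace ℝ (Fin n) → ℝ)
    (Hess : EuclideanSpace ℝ (Fin n) → EuclideanSpace ℝ (Fin n) →L[ℝ] EuclideanSpace ℝ (Fin n))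
    (LH : ℝ)
    (hf : ContDiff ℝ 2 f)
    (hHess : ∀ y, HasFDerivAt (gradient f) (Hess y) y)
    (hLip : ∀ y z, ‖Hess y - Hess z‖ ≤ LH * ‖y - z‖)
    (x : EuclideanSpace ℝ (Fin n))
    (κB : ℝ) (hκB : 0 < κB) (hHB : ‖Hess x‖ ≤ κB)
    (σ κC ε : ℝ) (hσ : 0 < σ) (hκC : 0 < κC) (hε : 0 < ε) (hgε : ε ≤ ‖gradient f x‖)
    (v : EuclideanSpace ℝ (Fin n)) (hv : ‖v‖ = 1) (hgv : ⟪gradient f x, v⟫ ≤ 0)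
    (hcurv : ⟪v, Hess x v⟫ ≤ -κC * Real.sqrt (σ * ‖gradient f x‖))
    (s : EuclideanSpace ℝ (Fin n))
    (hs : s = (κC * Real.sqrt (σ * ‖gradient f x‖) / σ) • v) :
    ‖gradient f (x + s)‖
      ≤ (LH * κC ^ 2 / (2 * σ) + κB * κC / Real.sqrt (ε * σ) + 1) * ‖gradient f x‖ :=
  gradient_growth_curv_step_general f Hess LH hHess hLip x κB hHB σ κC ε hσ hκC hε hgε v hv s hs
end

section
/- Let f : ℝⁿ → ℝ be twice continuously differentiable with L_H-Lipschitz Hessian. Fix x ∈ ℝⁿ, set g := ∇f(x) and H := ∇²f(x), and suppose g ≠ 0. Let σ > 0, κ_a ≥ 1, ς₁ ∈ (0,1], ς₂ ∈ [0,1/2), κ_θ > 0, and let s ∈ ℝⁿ satisfy ‖(H + √(κ_a σ‖g‖)·I)s + g‖ ≤ ς₂·√(κ_a σ‖g‖)·‖s‖ and ‖s‖ ≤ ((1+κ_θ)/ς₁)·√(‖g‖/(κ_a σ)). Then ‖∇f(x+s)‖ ≤ (L_H(1+κ_θ)/(2 ς₁² κ_a σ) + (1+ς₂)/ς₁)·(1+κ_θ)·‖g‖.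 -/
/-!
Taylor's theorem with a Lipschitz Hessian bounds `∇f(x+s) - g - H s` by `L_H/2 ‖s‖²`, and the
residual condition bounds `H s + g` by `(1 + ς₂) √(κ_a σ ‖g‖) ‖s‖`. The step-length bound turns
both terms into multiples of `‖g‖`, since `√(κ_a σ ‖g‖) · √(‖g‖ / (κ_a σ)) = ‖g‖`.
-/

theorem nonneg_of_norm_sub_le_mul_norm_sub {E F : Type*} [NormedAddCommGroup E] [Nontrivial E]
    [SeminormedAddCommGroup F] {φ : E → F} {L : ℝ} (h : ∀ y z, ‖φ y - φ z‖ ≤ L * ‖y - z‖) :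
    0 ≤ L := by
  obtain ⟨y, z, hyz⟩ := exists_pair_ne E
  exact nonneg_of_mul_nonneg_left ((norm_nonneg _).trans (h y z))
    (norm_pos_iff.2 (sub_ne_zero.2 hyz))

section Taylor

variable {E F : Type*} [NormedAddCommGroup E] [NormedSpace ℝ E]
  [NormedAddCommGroup F] [NormedSpace ℝ F]

theorem norm_image_add_sub_sub_fderiv_le {f : E → F} {f' : E → E →L[ℝ] F} {L : ℝ}
    (hf : ∀ y, HasFDerivAt f (f' y) y) (x s : E) (hL : ∀ y, ‖f' y - f' x‖ ≤ L * ‖y - x‖) :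
    ‖f (x + s) - f x - f' x s‖ ≤ L / 2 * ‖s‖ ^ 2 := by
  let g : ℝ → F := fun t => f (x + t • s) - f x - t • f' x s
  have hg : ∀ t, HasDerivAt g (f' (x + t • s) s - f' x s) t := by
    intro t
    have hline : HasDerivAt (fun t : ℝ => x + t • s) s t := by
      simpa using ((hasDerivAt_id t).smul_const s).const_add x
    exact (((hf _).comp_hasDerivAt t hline).sub_const (f x)).sub
      (by simpa using (hasDerivAt_id t).smul_const (f' x s))
  have hB : ∀ t, HasDerivAt (fun t : ℝ => L / 2 * ‖s‖ ^ 2 * t ^ 2) (L * ‖s‖ ^ 2 * t) t := by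
    intro t
    refine ((hasDerivAt_pow 2 t).const_mul (L / 2 * ‖s‖ ^ 2)).congr_deriv ?_
    push_cast
    ring
  have hbound : ∀ t ∈ Set.Ico (0 : ℝ) 1, ‖f' (x + t • s) s - f' x s‖ ≤ L * ‖s‖ ^ 2 * t := by
    intro t ht
    calc ‖f' (x + t • s) s - f' x s‖ = ‖(f' (x + t • s) - f' x) s‖ := rfl
      _ ≤ ‖f' (x + t • s) - f' x‖ * ‖s‖ := ContinuousLinearMap.le_opNorm _ _
      _ ≤ L * ‖t • s‖ * ‖s‖ := by
          gcongr
          simpa using hL (x + t • s)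
      _ = L * ‖s‖ ^ 2 * t := by rw [norm_smul_of_nonneg ht.1]; ring
  have hg1 := image_norm_le_of_norm_deriv_right_le_deriv_boundary
    (fun t _ => (hg t).continuousAt.continuousWithinAt) (fun t _ => (hg t).hasDerivWithinAt)
    (by simp [g]) hB hbound (Set.right_mem_Icc.2 zero_le_one)
  simpa [g] using hg1

end Taylor

theorem sqrt_mul_mul_sqrt_div {a b : ℝ} (ha : 0 < a) (hb : 0 ≤ b) :
    √(a * b) * √(b / a) = b := by
  rw [← Real.sqrt_mul (by positivity), show a * b * (b / a) = b * b by field_simp,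
    Real.sqrt_mul_self hb]

theorem gradient_growth_convex_step_general {n : ℕ}
    (f : EuclideanSpace ℝ (Fin n) → ℝ)
    (Hess : EuclideanSpace ℝ (Fin n) → EuclideanSpace ℝ (Fin n) →L[ℝ] EuclideanSpace ℝ (Fin n))
    (LH : ℝ)
    (hHess : ∀ y, HasFDerivAt (gradient f) (Hess y) y)
    (hLip : ∀ y z, ‖Hess y - Hess z‖ ≤ LH * ‖y - z‖)
    (x s : EuclideanSpace ℝ (Fin n))
    (hg : gradient f x ≠ 0)
    (σ κa ς₁ ς₂ κθ : ℝ) (hσ : 0 < σ) (hκa : 1 ≤ κa)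
    (hς₂0 : 0 ≤ ς₂)
    (hres : ‖Hess x s + Real.sqrt (κa * σ * ‖gradient f x‖) • s + gradient f x‖
      ≤ ς₂ * Real.sqrt (κa * σ * ‖gradient f x‖) * ‖s‖)
    (hslen : ‖s‖ ≤ ((1 + κθ) / ς₁) * Real.sqrt (‖gradient f x‖ / (κa * σ))) :
    ‖gradient f (x + s)‖
      ≤ (LH * (1 + κθ) / (2 * ς₁ ^ 2 * κa * σ) + (1 + ς₂) / ς₁) * (1 + κθ)
          * ‖gradient f x‖ := by
  have : Nontrivial (EuclideanSpace ℝ (Fin n)) := nontrivial_of_ne _ _ hg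
  have hLH : 0 ≤ LH := nonneg_of_norm_sub_le_mul_norm_sub hLip
  have hA : 0 < κa * σ := by positivity
  set G := ‖gradient f x‖
  set ρ := √(κa * σ * G)
  set c := (1 + κθ) / ς₁
  have hρs : ρ * ‖s‖ ≤ c * G := by
    calc ρ * ‖s‖ ≤ ρ * (c * √(G / (κa * σ))) := by gcongr
      _ = c * G := by rw [mul_left_comm, sqrt_mul_mul_sqrt_div hA (norm_nonneg _)]
  have hs2 : ‖s‖ ^ 2 ≤ c ^ 2 * (G / (κa * σ)) := by
    rw [← Real.sq_sqrt (div_pos (norm_pos_iff.2 hg) hA).le, ← mul_pow]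
    gcongr
  have hTaylor := norm_image_add_sub_sub_fderiv_le hHess x s fun y => hLip y x
  have hsplit : gradient f (x + s)
      = (gradient f (x + s) - gradient f x - Hess x s) + (Hess x s + ρ • s + gradient f x)
        - ρ • s := by abel
  calc ‖gradient f (x + s)‖
      ≤ ‖gradient f (x + s) - gradient f x - Hess x s‖ + ‖Hess x s + ρ • s + gradient f x‖
        + ‖ρ • s‖ := by
          conv_lhs => rw [hsplit]
          exact norm_sub_le_of_le (norm_add_le _ _) le_rfl
    _ ≤ LH / 2 * ‖s‖ ^ 2 + ς₂ * ρ * ‖s‖ + ρ * ‖s‖ := by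
        rw [norm_smul_of_nonneg (Real.sqrt_nonneg _)]
        gcongr
    _ = LH / 2 * ‖s‖ ^ 2 + (1 + ς₂) * (ρ * ‖s‖) := by ring
    _ ≤ LH / 2 * (c ^ 2 * (G / (κa * σ))) + (1 + ς₂) * (c * G) := by gcongr
    _ = (LH * (1 + κθ) / (2 * ς₁ ^ 2 * κa * σ) + (1 + ς₂) / ς₁) * (1 + κθ) * G := by
        simp only [c]
        ring

/-- Lemma 3.3 of the paper, inequality (3.17): gradient growth after a
convex-type regularized Newton step. -/
theorem gradient_growth_convex_step {n : ℕ}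
    (f : EuclideanSpace ℝ (Fin n) → ℝ)
    (Hess : EuclideanSpace ℝ (Fin n) → EuclideanSpace ℝ (Fin n) →L[ℝ] EuclideanSpace ℝ (Fin n))
    (LH : ℝ)
    (hf : ContDiff ℝ 2 f)
    (hHess : ∀ y, HasFDerivAt (gradient f) (Hess y) y)
    (hLip : ∀ y z, ‖Hess y - Hess z‖ ≤ LH * ‖y - z‖)
    (x s : EuclideanSpace ℝ (Fin n))
    (hg : gradient f x ≠ 0)
    (σ κa ς₁ ς₂ κθ : ℝ) (hσ : 0 < σ) (hκa : 1 ≤ κa)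
    (hς₁0 : 0 < ς₁) (hς₁1 : ς₁ ≤ 1) (hς₂0 : 0 ≤ ς₂) (hς₂1 : ς₂ < 1 / 2) (hκθ : 0 < κθ)
    (hres : ‖Hess x s + Real.sqrt (κa * σ * ‖gradient f x‖) • s + gradient f x‖
      ≤ ς₂ * Real.sqrt (κa * σ * ‖gradient f x‖) * ‖s‖)
    (hslen : ‖s‖ ≤ ((1 + κθ) / ς₁) * Real.sqrt (‖gradient f x‖ / (κa * σ))) :
    ‖gradient f (x + s)‖
      ≤ (LH * (1 + κθ) / (2 * ς₁ ^ 2 * κa * σ) + (1 + ς₂) / ς₁) * (1 + κθ)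
          * ‖gradient f x‖ :=
  gradient_growth_convex_step_general f Hess LH hHess hLip x s hg σ κa ς₁ ς₂ κθ hσ hκa hς₂0 hres
    hslen
end

section
/- Let f : ℝⁿ → ℝ be twice continuously differentiable with L_H-Lipschitz Hessian, L_H > 0. Fix x ∈ ℝⁿ, set g := ∇f(x) and H := ∇²f(x), and suppose g ≠ 0. Let σ > 0, ς₃ ∈ [0,1], κ_θ > 0, κ_C > 0, κ_a ≥ 1, set μ := [−λ_min(H)]₊, and suppose μ ≤ κ_C·√(σ‖g‖). Let s ∈ ℝⁿ satisfy ‖(H + (√(σ‖g‖) + μ)·I)s + g‖ ≤ ς₃·√(σ‖g‖)·‖s‖. Then ‖s‖ ≥ (−(2+κ_C)·√(κ_a σ‖g‖) + √((2+κ_C)²·κ_a σ‖g‖ + 2 L_H ‖∇f(x+s)‖))/L_H. -/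
open RealInnerProductSpace

/-! A regularized Newton step `s` makes the model `∇f(x) + (H + ρ I) s` small, and the Lipschitz
Hessian makes `∇f(x + s)` differ from `∇f(x) + H s` by at most `L_H ‖s‖² / 2`. Hence
`‖∇f(x + s)‖ ≤ L_H ‖s‖² / 2 + (ς₃ + 1) r ‖s‖ + μ ‖s‖` with `r = √(σ ‖g‖)`, and the right side is
at most `L_H ‖s‖² / 2 + a ‖s‖` with `a = (2 + κ_C) √(κ_a σ ‖g‖)`; the bound on `‖s‖`
is the positive root of this quadratic. -/

section Taylor

variable {E F : Type*} [NormedAddCommGroup E] [NormedSpace ℝ E]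
  [NormedAddCommGroup F] [NormedSpace ℝ F]

theorem norm_add_sub_sub_le_of_lipschitz_fderiv (G : E → F) (D : E → E →L[ℝ] F) (L : ℝ)
    (hD : ∀ y, HasFDerivAt G (D y) y) (hLip : ∀ y z, ‖D y - D z‖ ≤ L * ‖y - z‖) (x s : E) :
    ‖G (x + s) - G x - D x s‖ ≤ L / 2 * ‖s‖ ^ 2 := by
  set φ : ℝ → F := fun t => G (x + t • s) - G x - t • D x s with hφ_def
  have hφ : ∀ t : ℝ, HasDerivAt φ (D (x + t • s) s - D x s) t := by
    intro t
    have hline : HasDerivAt (fun t : ℝ => x + t • s) s t := by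
      simpa using ((hasDerivAt_id t).smul_const s).const_add x
    have hlin : HasDerivAt (fun t : ℝ => t • D x s) (D x s) t := by
      simpa using (hasDerivAt_id t).smul_const (D x s)
    exact (((hD _).comp_hasDerivAt t hline).sub_const (G x)).sub hlin
  have hB : ∀ t : ℝ, HasDerivAt (fun t => L / 2 * ‖s‖ ^ 2 * t ^ 2) (L * ‖s‖ ^ 2 * t) t := by
    intro t
    exact ((hasDerivAt_pow 2 t).const_mul (L / 2 * ‖s‖ ^ 2)).congr_deriv (by push_cast; ring)
  have hbound : ∀ t ∈ Set.Ico (0 : ℝ) 1, ‖D (x + t • s) s - D x s‖ ≤ L * ‖s‖ ^ 2 * t := by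
    intro t ht
    calc ‖D (x + t • s) s - D x s‖ ≤ ‖D (x + t • s) - D x‖ * ‖s‖ :=
          (D (x + t • s) - D x).le_opNorm s
      _ ≤ L * ‖t • s‖ * ‖s‖ := by
          gcongr
          simpa using hLip (x + t • s) x
      _ = L * ‖s‖ ^ 2 * t := by
          rw [norm_smul, Real.norm_eq_abs, abs_of_nonneg ht.1]
          ring
  have key := image_norm_le_of_norm_deriv_right_le_deriv_boundary
    (fun t _ => (hφ t).continuousAt.continuousWithinAt) (fun t _ => (hφ t).hasDerivWithinAt)
    (by simp [hφ_def]) hB hbound (Set.right_mem_Icc.2 zero_le_one)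
  simpa [hφ_def] using key

end Taylor

section RegularizedNewton

variable {E : Type*} [NormedAddCommGroup E] [InnerProductSpace ℝ E] [CompleteSpace E]

theorem norm_gradient_add_le_of_regularized_residual_le (f : E → ℝ) (Hess : E → E →L[ℝ] E)
    (L : ℝ) (hHess : ∀ y, HasFDerivAt (gradient f) (Hess y) y)
    (hLip : ∀ y z, ‖Hess y - Hess z‖ ≤ L * ‖y - z‖) {x s : E} {ρ ε : ℝ} (hρ : 0 ≤ ρ)
    (hres : ‖Hess x s + ρ • s + gradient f x‖ ≤ ε * ‖s‖) :
    ‖gradient f (x + s)‖ ≤ L / 2 * ‖s‖ ^ 2 + (ε + ρ) * ‖s‖ := by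
  have htaylor := norm_add_sub_sub_le_of_lipschitz_fderiv _ Hess L hHess hLip x s
  calc ‖gradient f (x + s)‖
      = ‖(gradient f (x + s) - gradient f x - Hess x s)
          + (Hess x s + ρ • s + gradient f x) - ρ • s‖ := by congr 1; abel
    _ ≤ ‖gradient f (x + s) - gradient f x - Hess x s‖
          + ‖Hess x s + ρ • s + gradient f x‖ + ‖ρ • s‖ := by
        grw [norm_sub_le, norm_add_le]
    _ ≤ L / 2 * ‖s‖ ^ 2 + ε * ‖s‖ + ρ * ‖s‖ := by
        rw [norm_smul, Real.norm_of_nonneg hρ]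
        gcongr
    _ = L / 2 * ‖s‖ ^ 2 + (ε + ρ) * ‖s‖ := by ring

end RegularizedNewton

theorem neg_add_sqrt_div_le_of_le_half_mul_sq_add_mul {L a t y : ℝ} (hL : 0 < L) (ha : 0 ≤ a)
    (ht : 0 ≤ t) (hy : y ≤ L / 2 * t ^ 2 + a * t) :
    (-a + Real.sqrt (a ^ 2 + 2 * L * y)) / L ≤ t := by
  have hsqrt : Real.sqrt (a ^ 2 + 2 * L * y) ≤ L * t + a := by
    rw [Real.sqrt_le_iff]
    refine ⟨by positivity, ?_⟩
    nlinarith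
  rw [div_le_iff₀ hL]
  linarith

theorem step_length_lower_bound_general {n : ℕ}
    (f : EuclideanSpace ℝ (Fin n) → ℝ)
    (Hess : EuclideanSpace ℝ (Fin n) → EuclideanSpace ℝ (Fin n) →L[ℝ] EuclideanSpace ℝ (Fin n))
    (LH : ℝ) (hLH : 0 < LH)
    (hHess : ∀ y, HasFDerivAt (gradient f) (Hess y) y)
    (hLip : ∀ y z, ‖Hess y - Hess z‖ ≤ LH * ‖y - z‖)
    (x s : EuclideanSpace ℝ (Fin n))
    (σ ς₃ κC κa : ℝ) (hσ : 0 < σ) (hς₃1 : ς₃ ≤ 1)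
    (hκC : 0 < κC) (hκa : 1 ≤ κa)
    (μ : ℝ) (hμ : μ = max (-(lamMin fun v => Hess x v)) 0)
    (hμκ : μ ≤ κC * Real.sqrt (σ * ‖gradient f x‖))
    (hres : ‖Hess x s + (Real.sqrt (σ * ‖gradient f x‖) + μ) • s + gradient f x‖
      ≤ ς₃ * Real.sqrt (σ * ‖gradient f x‖) * ‖s‖) :
    ‖s‖ ≥ (-(2 + κC) * Real.sqrt (κa * σ * ‖gradient f x‖)
        + Real.sqrt ((2 + κC) ^ 2 * (κa * σ * ‖gradient f x‖)
            + 2 * LH * ‖gradient f (x + s)‖)) / LH := by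
  set r := Real.sqrt (σ * ‖gradient f x‖)
  set a := (2 + κC) * Real.sqrt (κa * σ * ‖gradient f x‖)
  have hμ0 : 0 ≤ μ := hμ ▸ le_max_right _ _
  have hσg : 0 ≤ σ * ‖gradient f x‖ := by positivity
  have hr_le : r ≤ Real.sqrt (κa * σ * ‖gradient f x‖) :=
    Real.sqrt_le_sqrt (by nlinarith)
  have hcoef : ς₃ * r + (r + μ) ≤ a := by
    have : ς₃ * r ≤ r := mul_le_of_le_one_left (Real.sqrt_nonneg _) hς₃1
    nlinarith
  have hstep := norm_gradient_add_le_of_regularized_residual_le f Hess LH hHess hLip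
    (by positivity : 0 ≤ r + μ) hres
  have ha_sq : (2 + κC) ^ 2 * (κa * σ * ‖gradient f x‖) = a ^ 2 := by
    rw [mul_pow, Real.sq_sqrt (by nlinarith)]
  rw [ge_iff_le, ha_sq, neg_mul]
  refine neg_add_sqrt_div_le_of_le_half_mul_sq_add_mul hLH (by positivity) (norm_nonneg s) ?_
  exact hstep.trans (by gcongr)

/-- Lemma 3.3 of the paper: lower bound on the length of a regularized Newton
step in terms of the gradient at the next point. -/
theorem step_length_lower_bound {n : ℕ}
    (f : EuclideanSpace ℝ (Fin n) → ℝ)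
    (Hess : EuclideanSpace ℝ (Fin n) → EuclideanSpace ℝ (Fin n) →L[ℝ] EuclideanSpace ℝ (Fin n))
    (LH : ℝ) (hLH : 0 < LH)
    (hf : ContDiff ℝ 2 f)
    (hHess : ∀ y, HasFDerivAt (gradient f) (Hess y) y)
    (hLip : ∀ y z, ‖Hess y - Hess z‖ ≤ LH * ‖y - z‖)
    (x s : EuclideanSpace ℝ (Fin n))
    (hg : gradient f x ≠ 0)
    (σ ς₃ κθ κC κa : ℝ) (hσ : 0 < σ) (hς₃0 : 0 ≤ ς₃) (hς₃1 : ς₃ ≤ 1) (hκθ : 0 < κθ)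
    (hκC : 0 < κC) (hκa : 1 ≤ κa)
    (μ : ℝ) (hμ : μ = max (-(lamMin fun v => Hess x v)) 0)
    (hμκ : μ ≤ κC * Real.sqrt (σ * ‖gradient f x‖))
    (hres : ‖Hess x s + (Real.sqrt (σ * ‖gradient f x‖) + μ) • s + gradient f x‖
      ≤ ς₃ * Real.sqrt (σ * ‖gradient f x‖) * ‖s‖) :
    ‖s‖ ≥ (-(2 + κC) * Real.sqrt (κa * σ * ‖gradient f x‖)
        + Real.sqrt ((2 + κC) ^ 2 * (κa * σ * ‖gradient f x‖)
            + 2 * LH * ‖gradient f (x + s)‖)) / LH :=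
  step_length_lower_bound_general f Hess LH hLH hHess hLip x s σ ς₃ κC κa hσ hς₃1 hκC hκa μ hμ hμκ
    hres
end

section
/- Let L > 0, κ_m > 0, κ_C > 0, κ_a ≥ 1, A > 0 and B ≥ 0 be real numbers with A ≤ 2 κ_m L B. Then ((−(2+κ_C)·√(κ_a A) + √((2+κ_C)²·κ_a A + 2 L B))/L)² ≥ A/(κ_m L·((2+κ_C)·√κ_a + √((2+κ_C)²·κ_a + 1/κ_m)))². -/
/-!
Write `c = 2 + κC`, `s = √κa`, `a = √A` and `D` for the bracket in the denominator. Then `D` is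
a root of `D² = 2 c s D + 1/κm`, so `t = a / (κm D)` satisfies `t² + 2 (c s a) t = A / κm ≤ 2 L B`.
Hence `t` lies below the positive root `-c s a + √((c s a)² + 2 L B)` of `x² + 2 (c s a) x = 2 L B`,
and dividing by `L` and squaring gives the inequality.
-/

theorem le_neg_add_sqrt_of_sq_add_two_mul_le {x p q : ℝ} (h : x ^ 2 + 2 * p * x ≤ q) :
    x ≤ -p + √(p ^ 2 + q) := by
  have : x + p ≤ √(p ^ 2 + q) := Real.le_sqrt_of_sq_le (by linarith [h])
  linarith

theorem add_sqrt_sq_add_pos (b : ℝ) {e : ℝ} (he : 0 < e) : 0 < b + √(b ^ 2 + e) := by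
  have : -b < √(b ^ 2 + e) := Real.lt_sqrt_of_sq_lt (by linarith)
  linarith

theorem add_sqrt_sq_add_sq (b : ℝ) {e : ℝ} (he : 0 ≤ e) :
    (b + √(b ^ 2 + e)) ^ 2 = 2 * b * (b + √(b ^ 2 + e)) + e := by
  have : √(b ^ 2 + e) ^ 2 = b ^ 2 + e := Real.sq_sqrt (by positivity)
  linear_combination this

theorem decrease_conversion_inequality_general
    (L κm κC κa A B : ℝ) (hL : 0 < L) (hκm : 0 < κm) (hκa : 1 ≤ κa)
    (hA : 0 < A) (hAB : A ≤ 2 * κm * L * B) :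
    ((-(2 + κC) * Real.sqrt (κa * A)
        + Real.sqrt ((2 + κC) ^ 2 * (κa * A) + 2 * L * B)) / L) ^ 2
      ≥ A / (κm * L * ((2 + κC) * Real.sqrt κa
          + Real.sqrt ((2 + κC) ^ 2 * κa + 1 / κm))) ^ 2 := by
  set c := 2 + κC
  have hs : √κa ^ 2 = κa := Real.sq_sqrt (by linarith)
  have ha : √A ^ 2 = A := Real.sq_sqrt hA.le
  have hcs : c ^ 2 * κa = (c * √κa) ^ 2 := by rw [mul_pow, hs]
  have hD := add_sqrt_sq_add_sq (c * √κa) (one_div_nonneg.2 hκm.le)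
  have hD0 := add_sqrt_sq_add_pos (c * √κa) (one_div_pos.2 hκm)
  rw [← hcs] at hD hD0
  set D := c * √κa + √(c ^ 2 * κa + 1 / κm)
  clear_value c D
  set t := √A / (κm * D) with ht_def
  have ht : t ^ 2 + 2 * (c * √κa * √A) * t = A / κm := by
    rw [ht_def]
    linear_combination (norm := (field_simp; ring))
      (1 / (κm ^ 2 * D ^ 2) + 2 * c * √κa / (κm * D)) * ha - A / (κm * D ^ 2) * hD
  have hroot : t ≤ -(c * √κa * √A) + √((c * √κa * √A) ^ 2 + 2 * L * B) :=
    le_neg_add_sqrt_of_sq_add_two_mul_le <| ht ▸ (div_le_iff₀ hκm).2 (by linarith)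
  have hRHS : A / (κm * L * D) ^ 2 = (t / L) ^ 2 := by
    rw [div_div, div_pow, ha, mul_right_comm]
  have hp : (c * √κa * √A) ^ 2 = c ^ 2 * (κa * A) := by rw [mul_pow, mul_pow, hs, ha]; ring
  rw [ge_iff_le, hRHS, Real.sqrt_mul (by linarith) A]
  refine pow_le_pow_left₀ (by positivity) (div_le_div_of_nonneg_right ?_ hL.le) 2
  rw [hp] at hroot
  simpa only [neg_mul, mul_assoc] using hroot

/-- The elementary real inequality used in Lemma 3.4 of the paper
(inequality (3.25)), with A = σ_k‖g_k‖ and B = ‖g_{k+1}‖. -/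
theorem decrease_conversion_inequality
    (L κm κC κa A B : ℝ) (hL : 0 < L) (hκm : 0 < κm) (hκC : 0 < κC) (hκa : 1 ≤ κa)
    (hA : 0 < A) (hB : 0 ≤ B) (hAB : A ≤ 2 * κm * L * B) :
    ((-(2 + κC) * Real.sqrt (κa * A)
        + Real.sqrt ((2 + κC) ^ 2 * (κa * A) + 2 * L * B)) / L) ^ 2
      ≥ A / (κm * L * ((2 + κC) * Real.sqrt κa
          + Real.sqrt ((2 + κC) ^ 2 * κa + 1 / κm))) ^ 2 :=
  decrease_conversion_inequality_general L κm κC κa A B hL hκm hκa hA hAB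
end

section
/- Let ε > 0, N ≥ 1, and let g : {0,…,N} → ℝ satisfy g(i) > 0 for all i, g(N) ≥ ε, and g(0) = G₀ > 0. Let D, V, C be pairwise disjoint sets with D ∪ V ∪ C = {0,…,N−1}, and let c₁ ≥ 1 and c₂ ≥ 1 be such that g(i+1) ≤ c₁·g(i) for all i ∈ D, g(i+1) ≤ (1/2)·g(i) for all i ∈ V, and g(i+1) ≤ c₂·g(i) for all i ∈ C. Then |V| ≤ (log c₁ / log 2)·|D| + (log c₂ / log 2)·|C| + (log G₀ + |log ε|)/log 2. -/
/-- The counting argument of Lemma 3.4 of the paper (inequality (3.26)):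
bound on the number of gradient-halving iterations. -/
theorem divgrad_counting
    (ε G₀ c₁ c₂ : ℝ) (N : ℕ) (hN : 1 ≤ N) (hε : 0 < ε) (hG₀ : 0 < G₀)
    (g : ℕ → ℝ) (hgpos : ∀ i ≤ N, 0 < g i) (hgN : ε ≤ g N) (hg0 : g 0 = G₀)
    (D V C : Finset ℕ)
    (hDV : Disjoint D V) (hDC : Disjoint D C) (hVC : Disjoint V C)
    (hunion : D ∪ V ∪ C = Finset.range N)
    (hc₁ : 1 ≤ c₁) (hc₂ : 1 ≤ c₂)
    (hD : ∀ i ∈ D, g (i + 1) ≤ c₁ * g i)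
    (hV : ∀ i ∈ V, g (i + 1) ≤ (1 / 2) * g i)
    (hC : ∀ i ∈ C, g (i + 1) ≤ c₂ * g i) :
    (V.card : ℝ) ≤ (Real.log c₁ / Real.log 2) * D.card
      + (Real.log c₂ / Real.log 2) * C.card
      + (Real.log G₀ + |Real.log ε|) / Real.log 2 := by
  set f : ℕ → ℝ := fun i => if i ∈ D then c₁ else if i ∈ V then 1 / 2 else c₂ with hf
  have hfpos : ∀ i, 0 < f i := by
    intro i
    simp only [hf]
    split_ifs <;> linarith
  have hstep : ∀ i < N, g (i + 1) ≤ f i * g i := by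
    intro i hi
    have hmem : i ∈ D ∪ V ∪ C := by rw [hunion]; exact Finset.mem_range.mpr hi
    simp only [hf]
    by_cases h1 : i ∈ D
    · simpa [h1] using hD i h1
    · by_cases h2 : i ∈ V
      · simpa [h1, h2] using hV i h2
      · have h3 : i ∈ C := by
          rcases Finset.mem_union.mp hmem with h | h
          · rcases Finset.mem_union.mp h with h | h <;> tauto
          · exact h
        simpa [h1, h2] using hC i h3
  have key : ∀ n ≤ N, g n ≤ g 0 * ∏ i ∈ Finset.range n, f i := by
    intro n hn
    induction n with
    | zero => simp
    | succ n ih =>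
      have hn' : n ≤ N := Nat.le_of_succ_le hn
      have h1 : g (n + 1) ≤ f n * g n := hstep n (Nat.lt_of_succ_le hn)
      have h2 : g n ≤ g 0 * ∏ i ∈ Finset.range n, f i := ih hn'
      calc g (n + 1) ≤ f n * g n := h1
        _ ≤ f n * (g 0 * ∏ i ∈ Finset.range n, f i) := by
            exact mul_le_mul_of_nonneg_left h2 (hfpos n).le
        _ = g 0 * ∏ i ∈ Finset.range (n + 1), f i := by
            rw [Finset.prod_range_succ]; ring
  have hDp : ∏ i ∈ D, f i = c₁ ^ D.card := by
    rw [Finset.prod_congr rfl (fun i hi => by simp [hf, hi] : ∀ i ∈ D, f i = c₁),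
      Finset.prod_const]
  have hVp : ∏ i ∈ V, f i = (1 / 2 : ℝ) ^ V.card := by
    refine (Finset.prod_congr rfl (fun i hi => ?_)).trans (Finset.prod_const _)
    have : i ∉ D := fun h => (Finset.disjoint_left.mp hDV h) hi
    simp [hf, this, hi]
  have hCp : ∏ i ∈ C, f i = c₂ ^ C.card := by
    refine (Finset.prod_congr rfl (fun i hi => ?_)).trans (Finset.prod_const _)
    have h1 : i ∉ D := fun h => (Finset.disjoint_left.mp hDC h) hi
    have h2 : i ∉ V := fun h => (Finset.disjoint_left.mp hVC h) hi
    simp [hf, h1, h2]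
  have hprod : ∏ i ∈ Finset.range N, f i
      = c₁ ^ D.card * ((1 / 2 : ℝ) ^ V.card * c₂ ^ C.card) := by
    rw [← hunion, Finset.prod_union (Finset.disjoint_union_left.mpr ⟨hDC, hVC⟩),
      Finset.prod_union hDV, hDp, hVp, hCp]
    ring
  have hmain : ε ≤ G₀ * (c₁ ^ D.card * ((1 / 2 : ℝ) ^ V.card * c₂ ^ C.card)) := by
    calc ε ≤ g N := hgN
      _ ≤ g 0 * ∏ i ∈ Finset.range N, f i := key N le_rfl
      _ = _ := by rw [hg0, hprod]
  have hc₁0 : (0:ℝ) < c₁ := by linarith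
  have hc₂0 : (0:ℝ) < c₂ := by linarith
  have hpos : (0:ℝ) < G₀ * (c₁ ^ D.card * ((1 / 2 : ℝ) ^ V.card * c₂ ^ C.card)) :=
    mul_pos hG₀ (mul_pos (pow_pos hc₁0 _) (mul_pos (pow_pos (by norm_num) _) (pow_pos hc₂0 _)))
  have hlog := Real.log_le_log hε hmain
  rw [Real.log_mul hG₀.ne' (by positivity), Real.log_mul (by positivity) (by positivity),
    Real.log_mul (by positivity) (by positivity), Real.log_pow, Real.log_pow, Real.log_pow,
    show ((1:ℝ)/2) = 2⁻¹ by norm_num, Real.log_inv] at hlog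
  have h2 : (0:ℝ) < Real.log 2 := Real.log_pos (by norm_num)
  have habs : -Real.log ε ≤ |Real.log ε| := neg_le_abs _
  rw [show (Real.log c₁ / Real.log 2) * D.card + (Real.log c₂ / Real.log 2) * C.card
      + (Real.log G₀ + |Real.log ε|) / Real.log 2
      = (Real.log c₁ * D.card + Real.log c₂ * C.card + (Real.log G₀ + |Real.log ε|))
        / Real.log 2 by ring, le_div_iff₀ h2]
  nlinarith [hlog, habs]
end

section
/- Let f₀, f_low ∈ ℝ with f₀ ≥ f_low, and let F : ℕ → ℝ be nonincreasing with F(0) = f₀ and F(j) ≥ f_low for all j. Let k ∈ ℕ and let D, V, C be pairwise disjoint subsets of {0,…,k}. Suppose there are δ_D > 0 and δ_C > 0 such that F(i) − F(i+1) ≥ δ_D for every i ∈ D and F(i) − F(i+1) ≥ δ_C for every i ∈ C, and suppose there are a, b, c ≥ 0 with |V| ≤ a·|D| + b·|C| + c. Then |D ∪ V ∪ C| ≤ (1+a)·(f₀ − f_low)/δ_D + (1+b)·(f₀ − f_low)/δ_C + c. -/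
lemma card_le_aux (f₀ flow : ℝ) (F : ℕ → ℝ) (hmono : Antitone F) (hF0 : F 0 = f₀)
    (hFlow : ∀ j, flow ≤ F j) (k : ℕ) (S : Finset ℕ) (hS : S ⊆ Finset.range (k + 1))
    (δ : ℝ) (hδ : 0 < δ) (hdec : ∀ i ∈ S, δ ≤ F i - F (i + 1)) :
    (S.card : ℝ) * δ ≤ f₀ - flow := by
  have h1 : (S.card : ℝ) * δ = ∑ i ∈ S, δ := by
    rw [Finset.sum_const, nsmul_eq_mul]
  have h2 : ∑ i ∈ S, δ ≤ ∑ i ∈ S, (F i - F (i + 1)) := Finset.sum_le_sum hdec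
  have h3 : ∑ i ∈ S, (F i - F (i + 1)) ≤ ∑ i ∈ Finset.range (k + 1), (F i - F (i + 1)) := by
    apply Finset.sum_le_sum_of_subset_of_nonneg hS
    intro i _ _
    have := hmono (Nat.le_succ i)
    linarith
  have h4 : ∑ i ∈ Finset.range (k + 1), (F i - F (i + 1)) = F 0 - F (k + 1) :=
    Finset.sum_range_sub' F (k + 1)
  have := hFlow (k + 1)
  linarith

/-- The structural counting argument underlying Theorem 3.5 of the paper:
bound on the total number of successful iterations. -/
theorem successful_iterations_total_bound
    (f₀ flow : ℝ) (hf : flow ≤ f₀)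
    (F : ℕ → ℝ) (hmono : Antitone F) (hF0 : F 0 = f₀) (hFlow : ∀ j, flow ≤ F j)
    (k : ℕ) (D V C : Finset ℕ)
    (hD : D ⊆ Finset.range (k + 1)) (hV : V ⊆ Finset.range (k + 1))
    (hC : C ⊆ Finset.range (k + 1))
    (hDV : Disjoint D V) (hDC : Disjoint D C) (hVC : Disjoint V C)
    (δD δC : ℝ) (hδD : 0 < δD) (hδC : 0 < δC)
    (hdecD : ∀ i ∈ D, δD ≤ F i - F (i + 1))
    (hdecC : ∀ i ∈ C, δC ≤ F i - F (i + 1))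
    (a b c : ℝ) (ha : 0 ≤ a) (hb : 0 ≤ b) (hc : 0 ≤ c)
    (hV' : (V.card : ℝ) ≤ a * D.card + b * C.card + c) :
    ((D ∪ V ∪ C).card : ℝ)
      ≤ (1 + a) * (f₀ - flow) / δD + (1 + b) * (f₀ - flow) / δC + c := by
  have hDb : (D.card : ℝ) * δD ≤ f₀ - flow :=
    card_le_aux f₀ flow F hmono hF0 hFlow k D hD δD hδD hdecD
  have hCb : (C.card : ℝ) * δC ≤ f₀ - flow :=
    card_le_aux f₀ flow F hmono hF0 hFlow k C hC δC hδC hdecC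
  have hcard : ((D ∪ V ∪ C).card : ℝ) ≤ (D.card : ℝ) + V.card + C.card := by
    have := Finset.card_union_le (D ∪ V) C
    have := Finset.card_union_le D V
    push_cast
    have h := Finset.card_union_le (D ∪ V) C
    have h2 := Finset.card_union_le D V
    have : (D ∪ V ∪ C).card ≤ D.card + V.card + C.card := by omega
    exact_mod_cast this
  have hD2 : (D.card : ℝ) ≤ (f₀ - flow) / δD := by
    rw [le_div_iff₀ hδD]; linarith
  have hC2 : (C.card : ℝ) ≤ (f₀ - flow) / δC := by
    rw [le_div_iff₀ hδC]; linarith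
  have e1 : (1 + a) * (f₀ - flow) / δD = (f₀ - flow) / δD + a * ((f₀ - flow) / δD) := by
    ring
  have e2 : (1 + b) * (f₀ - flow) / δC = (f₀ - flow) / δC + b * ((f₀ - flow) / δC) := by
    ring
  nlinarith [mul_le_mul_of_nonneg_left hD2 ha, mul_le_mul_of_nonneg_left hC2 hb]
end

section
/- Let n ≥ 1, let H be a real symmetric n×n matrix with λ_min(H) ≤ 0, let g ∈ ℝⁿ, σ > 0, and let v ∈ ℝⁿ satisfy ‖v‖ = 1, ⟨g,v⟩ ≤ 0 and Hv = λ_min(H)·v. Set s := (−λ_min(H)/σ)·v. Then −⟨g,s⟩ − (1/2)⟨s,Hs⟩ ≥ (1/2)·σ·‖s‖³. -/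
open RealInnerProductSpace

section Eigenstep

variable {E : Type*} [NormedAddCommGroup E] [InnerProductSpace ℝ E]

theorem inner_smul_apply_smul_of_apply_eq_smul (T : E →ₗ[ℝ] E) {v : E} {μ : ℝ}
    (hv : ‖v‖ = 1) (hTv : T v = μ • v) (t : ℝ) :
    ⟪t • v, T (t • v)⟫ = μ * t ^ 2 := by
  rw [map_smul, hTv, smul_smul, real_inner_smul_left, real_inner_smul_right,
    real_inner_self_eq_norm_sq, hv]
  ring

/-- The step length `‖s‖ = -μ / σ` is chosen so that `μ = -σ ‖s‖`. -/
theorem inner_eigenstep_apply_eq_neg_mul_norm_pow_three (T : E →ₗ[ℝ] E) {v : E} {μ σ : ℝ}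
    (hv : ‖v‖ = 1) (hTv : T v = μ • v) (hμ : μ ≤ 0) (hσ : 0 < σ) :
    ⟪(-μ / σ) • v, T ((-μ / σ) • v)⟫ = -(σ * ‖(-μ / σ) • v‖ ^ 3) := by
  have hnorm : ‖(-μ / σ) • v‖ = -μ / σ := by
    rw [norm_smul, hv, mul_one, Real.norm_of_nonneg (div_nonneg (neg_nonneg.2 hμ) hσ.le)]
  rw [inner_smul_apply_smul_of_apply_eq_smul T hv hTv, hnorm]
  field_simp

end Eigenstep

theorem quadratic_decrease_so_step_general {n : ℕ}
    (H : Matrix (Fin n) (Fin n) ℝ)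
    (hlamneg : lamMin (fun w => Matrix.toEuclideanLin H w) ≤ 0)
    (g v : EuclideanSpace ℝ (Fin n)) (σ : ℝ) (hσ : 0 < σ)
    (hv : ‖v‖ = 1) (hgv : ⟪g, v⟫ ≤ 0)
    (heig : Matrix.toEuclideanLin H v = lamMin (fun w => Matrix.toEuclideanLin H w) • v)
    (s : EuclideanSpace ℝ (Fin n))
    (hs : s = (-(lamMin fun w => Matrix.toEuclideanLin H w) / σ) • v) :
    -⟪g, s⟫ - (1 / 2) * ⟪s, Matrix.toEuclideanLin H s⟫ ≥ (1 / 2) * σ * ‖s‖ ^ 3 := by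
  have hcurv : ⟪s, Matrix.toEuclideanLin H s⟫ = -(σ * ‖s‖ ^ 3) := by
    rw [hs]
    exact inner_eigenstep_apply_eq_neg_mul_norm_pow_three _ hv heig hlamneg hσ
  have hgs : ⟪g, s⟫ ≤ 0 := by
    rw [hs, real_inner_smul_right]
    exact mul_nonpos_of_nonneg_of_nonpos (div_nonneg (neg_nonneg.2 hlamneg) hσ.le) hgv
  linarith

/-- Lemma 4.1 of the paper, inequality (4.6): model decrease of the second-order
eigenstep `s^{so}` of the SOAN2C algorithm. -/
theorem quadratic_decrease_so_step {n : ℕ} (hn : 1 ≤ n)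
    (H : Matrix (Fin n) (Fin n) ℝ) (hH : H.IsHermitian)
    (hlamneg : lamMin (fun w => Matrix.toEuclideanLin H w) ≤ 0)
    (g v : EuclideanSpace ℝ (Fin n)) (σ : ℝ) (hσ : 0 < σ)
    (hv : ‖v‖ = 1) (hgv : ⟪g, v⟫ ≤ 0)
    (heig : Matrix.toEuclideanLin H v = lamMin (fun w => Matrix.toEuclideanLin H w) • v)
    (s : EuclideanSpace ℝ (Fin n))
    (hs : s = (-(lamMin fun w => Matrix.toEuclideanLin H w) / σ) • v) :
    -⟪g, s⟫ - (1 / 2) * ⟪s, Matrix.toEuclideanLin H s⟫ ≥ (1 / 2) * σ * ‖s‖ ^ 3 :=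
  quadratic_decrease_so_step_general H hlamneg g v σ hσ hv hgv heig s hs
end

section
/- Let f : ℝⁿ → ℝ, x ∈ ℝⁿ, g ∈ ℝⁿ, let H be a real symmetric n×n matrix, and let ε₂ > 0, η₁ > 0, and 0 < σ ≤ σ_max. Suppose λ_min(H) ≤ −ε₂, and let v ∈ ℝⁿ satisfy ‖v‖ = 1, ⟨g,v⟩ ≤ 0 and Hv = λ_min(H)·v. Set s := (−λ_min(H)/σ)·v and suppose the acceptance condition f(x) − f(x+s) ≥ η₁·(−⟨g,s⟩ − (1/2)⟨s,Hs⟩) holds. Then f(x) − f(x+s) ≥ (η₁/(2 σ_max²))·ε₂³. -/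
open RealInnerProductSpace

/-- Lemma 4.2 of the paper, inequality (4.7): function decrease at a successful
second-order eigenstep of the SOAN2C algorithm. -/
theorem decrease_successful_so_step {n : ℕ}
    (f : EuclideanSpace ℝ (Fin n) → ℝ) (x g : EuclideanSpace ℝ (Fin n))
    (H : Matrix (Fin n) (Fin n) ℝ) (hH : H.IsHermitian)
    (ε₂ η₁ σ σmax : ℝ) (hε₂ : 0 < ε₂) (hη₁ : 0 < η₁) (hσ : 0 < σ) (hσmax : σ ≤ σmax)
    (hlamneg : lamMin (fun w => Matrix.toEuclideanLin H w) ≤ -ε₂)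
    (v : EuclideanSpace ℝ (Fin n)) (hv : ‖v‖ = 1) (hgv : ⟪g, v⟫ ≤ 0)
    (heig : Matrix.toEuclideanLin H v = lamMin (fun w => Matrix.toEuclideanLin H w) • v)
    (s : EuclideanSpace ℝ (Fin n))
    (hs : s = (-(lamMin fun w => Matrix.toEuclideanLin H w) / σ) • v)
    (hacc : f x - f (x + s)
      ≥ η₁ * (-⟪g, s⟫ - (1 / 2) * ⟪s, Matrix.toEuclideanLin H s⟫)) :
    f x - f (x + s) ≥ (η₁ / (2 * σmax ^ 2)) * ε₂ ^ 3 := by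
  set lam := lamMin (fun w => Matrix.toEuclideanLin H w) with hlam
  have hc : (0:ℝ) ≤ -lam / σ := by
    apply div_nonneg _ hσ.le
    linarith
  have hgs : ⟪g, s⟫ ≤ 0 := by
    rw [hs, real_inner_smul_right]
    exact mul_nonpos_of_nonneg_of_nonpos hc hgv
  have hvv : ⟪v, v⟫ = 1 := by
    rw [real_inner_self_eq_norm_sq, hv]; norm_num
  have hsHs : ⟪s, Matrix.toEuclideanLin H s⟫ = lam ^ 3 / σ ^ 2 := by
    rw [hs, map_smul, real_inner_smul_left, real_inner_smul_right, heig,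
      real_inner_smul_right, hvv]
    field_simp
  have hσ2 : (0:ℝ) < σ ^ 2 := by positivity
  have hσmax2 : σ ^ 2 ≤ σmax ^ 2 := by nlinarith
  have hlamcube : lam ^ 3 ≤ -ε₂ ^ 3 := by
    nlinarith [sq_nonneg (lam + ε₂), sq_nonneg (lam - ε₂), mul_pos hε₂ hε₂]
  have key : -⟪g, s⟫ - (1 / 2) * ⟪s, Matrix.toEuclideanLin H s⟫
      ≥ ε₂ ^ 3 / (2 * σmax ^ 2) := by
    rw [hsHs]
    have h1 : ε₂ ^ 3 / (2 * σmax ^ 2) ≤ -(lam ^ 3) / (2 * σ ^ 2) :=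
      div_le_div₀ (by nlinarith [pow_pos hε₂ 3]) (by nlinarith [pow_pos hε₂ 3]) (by positivity) (by linarith)
    have h2 : -(lam ^ 3) / (2 * σ ^ 2) = -(1/2) * (lam ^ 3 / σ ^ 2) := by ring
    linarith
  calc f x - f (x + s) ≥ η₁ * (-⟪g, s⟫ - (1 / 2) * ⟪s, Matrix.toEuclideanLin H s⟫) := hacc
    _ ≥ η₁ * (ε₂ ^ 3 / (2 * σmax ^ 2)) := mul_le_mul_of_nonneg_left key hη₁.le
    _ = (η₁ / (2 * σmax ^ 2)) * ε₂ ^ 3 := by ring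
end
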